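/- arXiv:1006.1520 — 6 statements merged into one kernel-verified Lean document; each statement's English description precedes it below -/
import Mathlib

section
/- Let 1 ≤ p < ∞ and for t ∈ ℝ define T_t(f)(z) = e^{-t/p} f(e^{-t} z). If f ∈ H^p(𝕌) and there exists F ∈ H^p(𝕌) such that lim_{t→0} ‖(T_t(f) − f)/t − F‖_p = 0, then the function z ↦ z f′(z) belongs to H^p(𝕌) and F(z) = −z f′(z) − (1/p) f(z) for all z ∈ 𝕌. -/
open Complex MeasureTheory Filter Topology Bornology

/-- The `p`-th power Hardy "norm": `sup_{y>0} ∫_ℝ |f(x+iy)|^p dx` (as an `ℝ≥0∞` value). -/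
noncomputable def hNormPow (p : ℝ) (f : ℂ → ℂ) : ENNReal :=
  ⨆ y ∈ Set.Ioi (0 : ℝ), ∫⁻ x : ℝ, ENNReal.ofReal (‖f ((x : ℂ) + (y : ℂ) * Complex.I)‖ ^ p)

/-- The Hardy norm `‖f‖_p = (sup_{y>0} ∫_ℝ |f(x+iy)|^p dx)^(1/p)`. -/
noncomputable def hNorm (p : ℝ) (f : ℂ → ℂ) : ENNReal := hNormPow p f ^ (1 / p)

/-- Membership in the Hardy space `H^p(𝕌)` of the upper half-plane. -/
def MemHp (p : ℝ) (f : ℂ → ℂ) : Prop :=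
  DifferentiableOn ℂ f {z : ℂ | 0 < z.im} ∧ hNormPow p f < ⊤


open Set Metric


lemma meanvalue {g : ℂ → ℂ} {c : ℂ} {r : ℝ} (hr : 0 < r)
    (hc : ContinuousOn g (closedBall c r))
    (hd : ∀ w ∈ ball c r, DifferentiableAt ℂ g w) :
    (2 * Real.pi) * ‖g c‖ ≤
      ∫ θ in (0:ℝ)..(2 * Real.pi), ‖g (circleMap c r θ)‖ := by
  have key := Complex.circleIntegral_sub_center_inv_smul_of_differentiable_on_off_countable hr
    Set.countable_empty hc (fun w hw => hd w hw.1)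
  have h2 : (∮ w in C(c, r), (w - c)⁻¹ • g w)
      = I * ∫ θ in (0:ℝ)..(2 * Real.pi), g (circleMap c r θ) := by
    rw [circleIntegral, ← intervalIntegral.integral_const_mul]
    refine intervalIntegral.integral_congr fun θ _ => ?_
    have hne : circleMap 0 r θ ≠ 0 := circleMap_ne_center hr.ne'
    simp only [deriv_circleMap, circleMap_sub_center, smul_eq_mul]
    field_simp
  rw [h2] at key
  have h3 : ∫ θ in (0:ℝ)..(2 * Real.pi), g (circleMap c r θ)
      = (2 * Real.pi : ℂ) * g c := by
    have hIne : (I : ℂ) ≠ 0 := I_ne_zero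
    apply mul_left_cancel₀ hIne
    rw [key]; push_cast; ring_nf
  have h4 : (2*Real.pi) * ‖g c‖ = ‖(2 * Real.pi : ℂ) * g c‖ := by
    rw [norm_mul, show ((2:ℂ) * (Real.pi:ℂ)) = ((2*Real.pi : ℝ):ℂ) by push_cast; ring,
      Complex.norm_real, Real.norm_eq_abs, abs_of_pos (by positivity)]
  rw [h4, ← h3]
  have := intervalIntegral.norm_integral_le_integral_norm
    (f := fun θ => g (circleMap c r θ)) (a := 0) (b := 2*Real.pi) (μ := volume) (by positivity)
  simpa using this

lemma circle_bound {p : ℝ} (hp : 1 ≤ p) {g : ℂ → ℂ} {c : ℂ} {r : ℝ} (hr : 0 < r)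
    (hc : ContinuousOn g (closedBall c r))
    (hd : ∀ w ∈ ball c r, DifferentiableAt ℂ g w) :
    ENNReal.ofReal (2 * Real.pi) * ENNReal.ofReal (‖g c‖ ^ p) ≤
      ∫⁻ θ in Set.Ioc (0:ℝ) (2 * Real.pi), ENNReal.ofReal (‖g (circleMap c r θ)‖ ^ p) := by
  have hp0 : (0:ℝ) < p := lt_of_lt_of_le one_pos hp
  have hgc : Continuous fun θ : ℝ => g (circleMap c r θ) := by
    rw [← continuousOn_univ]
    exact hc.comp (continuous_circleMap c r).continuousOn
      (fun θ _ => sphere_subset_closedBall (circleMap_mem_sphere c hr.le θ))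
  have habs : Continuous fun θ : ℝ => ‖g (circleMap c r θ)‖ :=
    continuous_norm.comp hgc
  -- mean value in ENNReal form
  have hmv := meanvalue hr hc hd
  have hInt : IntervalIntegrable (fun θ => ‖g (circleMap c r θ)‖)
      volume 0 (2*Real.pi) := habs.intervalIntegrable _ _
  have h1 : ENNReal.ofReal (2 * Real.pi) * ENNReal.ofReal (‖g c‖) ≤
      ∫⁻ θ in Set.Ioc (0:ℝ) (2 * Real.pi), ENNReal.ofReal (‖g (circleMap c r θ)‖) := by
    rw [← ENNReal.ofReal_mul (by positivity)]
    refine le_trans (ENNReal.ofReal_le_ofReal hmv) ?_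
    rw [intervalIntegral.integral_of_le (by positivity)] at *
    rw [← ofReal_integral_eq_lintegral_ofReal
      (habs.integrableOn_Ioc) (Filter.Eventually.of_forall fun θ => norm_nonneg _)]
  -- Jensen via Hölder
  rcases eq_or_lt_of_le hp with hp1 | hp1
  · subst hp1
    simpa using h1
  · set μ := volume.restrict (Set.Ioc (0:ℝ) (2 * Real.pi)) with hμ
    have hq : p.HolderConjugate (p.conjExponent) := Real.HolderConjugate.conjExponent hp1
    set q := p.conjExponent with hqdef
    have hmeas : AEMeasurable (fun θ : ℝ => ENNReal.ofReal (‖g (circleMap c r θ)‖)) μ :=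
      (ENNReal.continuous_ofReal.comp habs).aemeasurable
    have hold := ENNReal.lintegral_mul_le_Lp_mul_Lq μ hq hmeas
      (aemeasurable_const (b := (1:ENNReal)))
    have hμuniv : μ Set.univ = ENNReal.ofReal (2 * Real.pi) := by
      simp [hμ, Real.volume_Ioc, Real.pi_pos.le]
    simp only [Pi.mul_apply, mul_one, ENNReal.one_rpow, lintegral_const, one_mul] at hold
    rw [hμuniv] at hold
    -- h1 with hold : ∫⁻ f ≤ (∫⁻ f^p)^(1/p) * (2π)^(1/q)
    set A := ENNReal.ofReal (‖g c‖) with hA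
    set Mp := ∫⁻ θ, (ENNReal.ofReal (‖g (circleMap c r θ)‖)) ^ p ∂μ with hMp
    have h2 : ENNReal.ofReal (2 * Real.pi) * A ≤ Mp ^ (1/p) * ENNReal.ofReal (2 * Real.pi) ^ (1/q) :=
      le_trans h1 hold
    -- raise to p-th power
    have hc0 : (ENNReal.ofReal (2 * Real.pi)) ≠ 0 := by positivity
    have hcT : (ENNReal.ofReal (2 * Real.pi)) ≠ ⊤ := ENNReal.ofReal_ne_top
    have h3 : (ENNReal.ofReal (2 * Real.pi) * A) ^ p ≤
        (Mp ^ (1/p) * ENNReal.ofReal (2 * Real.pi) ^ (1/q)) ^ p :=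
      ENNReal.rpow_le_rpow h2 hp0.le
    rw [ENNReal.mul_rpow_of_nonneg _ _ hp0.le, ENNReal.mul_rpow_of_nonneg _ _ hp0.le,
      ← ENNReal.rpow_mul, ← ENNReal.rpow_mul, one_div, inv_mul_cancel₀ hp0.ne',
      ENNReal.rpow_one] at h3
    -- h3 : (2π)^p * A^p ≤ Mp * (2π)^(p/q)
    have hexp : (1/q) * p = p - 1 := by
      have h := hq.inv_add_inv_eq_one
      linear_combination p * h - mul_inv_cancel₀ hp0.ne'
    rw [hexp] at h3
    have hApe : A ^ p = ENNReal.ofReal (‖g c‖ ^ p) := by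
      rw [hA]; exact ENNReal.ofReal_rpow_of_nonneg (norm_nonneg _) hp0.le
    -- divide both sides by (2π)^(p-1)
    have h4 : ENNReal.ofReal (2 * Real.pi) * A ^ p ≤ Mp := by
      have hdiv := ENNReal.div_le_div_right (c := ENNReal.ofReal (2 * Real.pi) ^ (p-1)) h3
      have hne0 : ENNReal.ofReal (2 * Real.pi) ^ (p-1) ≠ 0 := by
        simp only [ne_eq, ENNReal.rpow_eq_zero_iff, not_or, not_and_or]
        exact ⟨Or.inl hc0, Or.inl hcT⟩
      have hneT : ENNReal.ofReal (2 * Real.pi) ^ (p-1) ≠ ⊤ :=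
        ENNReal.rpow_ne_top_of_nonneg (by linarith) hcT
      rw [mul_div_assoc (a := Mp), ENNReal.div_self hne0 hneT, mul_one] at hdiv
      calc ENNReal.ofReal (2 * Real.pi) * A ^ p
          = ENNReal.ofReal (2 * Real.pi) ^ p / ENNReal.ofReal (2 * Real.pi) ^ (p-1) * A ^ p := by
            rw [← ENNReal.rpow_sub _ _ hc0 hcT, show p - (p-1) = 1 by ring, ENNReal.rpow_one]
        _ = ENNReal.ofReal (2 * Real.pi) ^ p * A ^ p / ENNReal.ofReal (2 * Real.pi) ^ (p-1) := by
            rw [div_eq_mul_inv, div_eq_mul_inv]; ring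
        _ ≤ Mp := hdiv
    rw [hApe] at h4
    refine le_trans h4 ?_
    rw [hMp]
    refine lintegral_mono fun θ => ?_
    rw [← ENNReal.ofReal_rpow_of_nonneg (norm_nonneg _) hp0.le]


lemma upperHalf_open : IsOpen {w : ℂ | 0 < w.im} := isOpen_Ioi.preimage Complex.continuous_im

lemma dist_im {w z : ℂ} : |w.im - z.im| ≤ dist w z := by
  rw [Complex.dist_eq]
  simpa [Complex.sub_im] using Complex.abs_im_le_norm (w - z)

section PB
variable {p : ℝ} (hp : 1 ≤ p) {z : ℂ} (hz : 0 < z.im) {g : ℂ → ℂ}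
  (hg : DifferentiableOn ℂ g {w : ℂ | 0 < w.im})

lemma polar_inj : InjOn polarCoord.symm ((Ioo (0:ℝ) (z.im/2)) ×ˢ (Ioo (0:ℝ) (2*Real.pi))) := by
  rintro ⟨r₁, θ₁⟩ ⟨hr₁, hθ₁⟩ ⟨r₂, θ₂⟩ ⟨hr₂, hθ₂⟩ heq
  simp only [polarCoord_symm_apply, Prod.mk.injEq] at heq
  obtain ⟨h1, h2⟩ := heq
  simp only [mem_Ioo] at hr₁ hθ₁ hr₂ hθ₂
  have hrr : r₁ = r₂ := by
    have hsq : r₁^2 = r₂^2 := by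
      have e1 : r₁^2 * (Real.cos θ₁^2 + Real.sin θ₁^2) = r₂^2 * (Real.cos θ₂^2 + Real.sin θ₂^2) := by
        linear_combination (r₁*Real.cos θ₁ + r₂*Real.cos θ₂) * h1 + (r₁*Real.sin θ₁ + r₂*Real.sin θ₂) * h2
      rwa [Real.cos_sq_add_sin_sq, Real.cos_sq_add_sin_sq, mul_one, mul_one] at e1
    nlinarith [hr₁.1, hr₂.1]
  subst hrr
  have hcos : Real.cos θ₁ = Real.cos θ₂ := mul_left_cancel₀ hr₁.1.ne' h1
  have hsin : Real.sin θ₁ = Real.sin θ₂ := mul_left_cancel₀ hr₁.1.ne' h2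
  have hexp : Complex.exp (θ₁ * I) = Complex.exp (θ₂ * I) := by
    rw [Complex.exp_mul_I, Complex.exp_mul_I, ← Complex.ofReal_cos, ← Complex.ofReal_cos,
      ← Complex.ofReal_sin, ← Complex.ofReal_sin, hcos, hsin]
  obtain ⟨n, hn⟩ := Complex.exp_eq_exp_iff_exists_int.mp hexp
  have hθ : θ₁ = θ₂ + n * (2 * Real.pi) := by
    have := congrArg Complex.im hn
    simpa [Complex.mul_im, Complex.add_im] using this
  have hn0 : (n : ℝ) = 0 := by
    have hlt : |(n : ℝ)| < 1 := by
      rw [abs_lt]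
      constructor <;> nlinarith [Real.pi_pos, hθ₁.1, hθ₁.2, hθ₂.1, hθ₂.2]
    have : |n| < 1 := by exact_mod_cast (by push_cast; exact hlt : (|n| : ℝ) < 1)
    simp [Int.abs_lt_one_iff.mp this]
  rw [Prod.mk.injEq]
  refine ⟨rfl, by rw [hθ, hn0]; ring⟩

include hp hg in
omit hz in
lemma circle_step : ∀ r ∈ Ioo (0:ℝ) (z.im/2),
    ENNReal.ofReal (2 * Real.pi) * ENNReal.ofReal (‖g z‖ ^ p) ≤
      ∫⁻ θ in Ioc (0:ℝ) (2*Real.pi), ENNReal.ofReal (‖g (circleMap z r θ)‖ ^ p) := by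
  intro r hr
  simp only [mem_Ioo] at hr
  have hsub : closedBall z r ⊆ {w : ℂ | 0 < w.im} := by
    intro w hw
    have h1 : dist w z ≤ r := mem_closedBall.mp hw
    have h2 := dist_im (w := w) (z := z)
    simp only [Set.mem_setOf_eq]
    have := abs_le.mp (le_trans h2 h1)
    linarith [hr.2]
  exact circle_bound hp hr.1
    (hg.continuousOn.mono hsub)
    (fun w hw => (hg.differentiableAt (upperHalf_open.mem_nhds (hsub (ball_subset_closedBall hw)))))

end PB
section PB2
variable {p : ℝ} {z : ℂ} {g : ℂ → ℂ}

set_option maxHeartbeats 1000000 in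
lemma pointwise_bound (hp : 1 ≤ p) (hz : 0 < z.im) :
    ∃ C : ENNReal, C ≠ ⊤ ∧ ∀ g : ℂ → ℂ, DifferentiableOn ℂ g {w : ℂ | 0 < w.im} →
      ENNReal.ofReal (‖g z‖ ^ p) ≤ C * hNormPow p g := by
  have hp0 : (0:ℝ) < p := lt_of_lt_of_le one_pos hp
  set R := z.im / 2 with hRdef
  have hR : 0 < R := by positivity
  set D : ENNReal := ENNReal.ofReal (R/2) * ENNReal.ofReal (R/2) * ENNReal.ofReal (2*Real.pi)
    with hDdef
  have hD0 : D ≠ 0 := by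
    simp only [hDdef, ne_eq, mul_eq_zero, not_or, ENNReal.ofReal_eq_zero, not_le]
    refine ⟨⟨by positivity, by positivity⟩, by positivity⟩
  have hDT : D ≠ ⊤ := by
    simp only [hDdef]
    exact ENNReal.mul_ne_top (ENNReal.mul_ne_top ENNReal.ofReal_ne_top ENNReal.ofReal_ne_top)
      ENNReal.ofReal_ne_top
  refine ⟨D⁻¹ * ENNReal.ofReal (2*R), by
    exact ENNReal.mul_ne_top (ENNReal.inv_ne_top.mpr hD0) ENNReal.ofReal_ne_top, ?_⟩
  intro g hg
  set H : ℂ → ENNReal := fun w => ENNReal.ofReal (‖g w‖ ^ p) with hHdef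
  set A : ENNReal := H z with hAdef
  set M : ENNReal := hNormPow p g with hMdef
  -- continuity of H on the upper half plane
  have hrpow : Continuous fun t : ℝ => t ^ p :=
    continuous_iff_continuousAt.mpr fun t => Real.continuousAt_rpow_const t p (Or.inr hp0.le)
  have hHcont : ContinuousOn H {w : ℂ | 0 < w.im} := by
    exact ENNReal.continuous_ofReal.comp_continuousOn
      (hrpow.comp_continuousOn (continuous_norm.comp_continuousOn hg.continuousOn))
  set s : Set (ℝ × ℝ) := (Ioo (0:ℝ) R) ×ˢ (Ioo (0:ℝ) (2*Real.pi)) with hsdef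
  have hsmeas : MeasurableSet s := (measurableSet_Ioo).prod measurableSet_Ioo
  set G : ℝ × ℝ → ENNReal := fun q => H (z + q.1 + q.2 * I) with hGdef
  -- basic point locations
  have hmem_strip : ∀ q : ℝ × ℝ, q.2 ∈ Ioo (-R) R → 0 < (z + q.1 + q.2 * I).im := by
    rintro ⟨u, v⟩ hv
    simp only [mem_Ioo] at hv
    simp only [Complex.add_im, Complex.ofReal_im, Complex.mul_im, Complex.ofReal_re,
      Complex.I_im, Complex.I_re, Complex.ofReal_im]
    simp only [hRdef] at hv
    nlinarith [hv.1, hv.2]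
  -- change of variables
  set B : ℝ × ℝ → ℝ × ℝ →L[ℝ] ℝ × ℝ := fun q =>
    LinearMap.toContinuousLinearMap (Matrix.toLin (Module.Basis.finTwoProd ℝ) (Module.Basis.finTwoProd ℝ)
      !![Real.cos q.2, -q.1 * Real.sin q.2; Real.sin q.2, q.1 * Real.cos q.2]) with hBdef
  have hB_det : ∀ q : ℝ × ℝ, (B q).det = q.1 := by
    intro q
    conv_rhs => rw [← one_mul q.1, ← Real.cos_sq_add_sin_sq q.2]
    simp only [hBdef, neg_mul, LinearMap.det_toContinuousLinearMap, LinearMap.det_toLin,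
      Matrix.det_fin_two_of, sub_neg_eq_add]
    ring
  have hCoV : ∫⁻ x in polarCoord.symm '' s, G x =
      ∫⁻ q in s, ENNReal.ofReal |(B q).det| * G (polarCoord.symm q) :=
    lintegral_image_eq_lintegral_abs_det_fderiv_mul volume hsmeas
      (fun q _ => (hasFDerivAt_polarCoord_symm q).hasFDerivWithinAt) (polar_inj (z := z)) G
  have hCoV' : ∫⁻ x in polarCoord.symm '' s, G x =
      ∫⁻ q in s, ENNReal.ofReal q.1 * G (polarCoord.symm q) := by
    rw [hCoV]
    refine setLIntegral_congr_fun hsmeas (fun q hq => ?_)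
    rw [hB_det, abs_of_pos hq.1.1]
  have hsymm_eq : ∀ q : ℝ × ℝ, (polarCoord.symm q : ℝ × ℝ) = (q.1 * Real.cos q.2, q.1 * Real.sin q.2) :=
    fun q => polarCoord_symm_apply q
  have hψ : Continuous fun q : ℝ × ℝ => z + q.1 + q.2 * I :=
    (continuous_const.add (Complex.continuous_ofReal.comp continuous_fst)).add
      ((Complex.continuous_ofReal.comp continuous_snd).mul continuous_const)
  have hGcont : ContinuousOn G (univ ×ˢ Ioo (-R) R) := by
    refine hHcont.comp hψ.continuousOn ?_
    intro q hq
    exact hmem_strip q hq.2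
  have hmaps : ∀ q ∈ s, (polarCoord.symm q : ℝ × ℝ) ∈ univ ×ˢ Ioo (-R) R := by
    rintro ⟨r, θ⟩ hq
    simp only [hsdef, mem_prod, mem_Ioo] at hq
    rw [hsymm_eq]
    refine ⟨trivial, ?_⟩
    simp only [mem_Ioo]
    have h1 : |r * Real.sin θ| ≤ r := by
      rw [abs_mul, abs_of_pos hq.1.1]
      calc r * |Real.sin θ| ≤ r * 1 := by
            exact mul_le_mul_of_nonneg_left (Real.abs_sin_le_one θ) hq.1.1.le
        _ = r := mul_one r
    have := abs_le.mp h1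
    constructor <;> nlinarith [hq.1.2]
  have hφmeas : AEMeasurable (fun q : ℝ × ℝ =>
      ENNReal.ofReal q.1 * G (polarCoord.symm q)) (volume.restrict s) := by
    refine (AEMeasurable.mul (f := fun q : ℝ × ℝ => ENNReal.ofReal q.1)
      (g := fun q => G (polarCoord.symm q)) ?_ ?_ :)
    · exact (ENNReal.measurable_ofReal.comp measurable_fst).aemeasurable
    · refine ContinuousOn.aemeasurable ?_ hsmeas
      refine hGcont.comp ?_ hmaps
      have : Continuous fun q : ℝ × ℝ => (polarCoord.symm q : ℝ × ℝ) := by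
        simp only [hsymm_eq]
        exact ((continuous_fst.mul (Real.continuous_cos.comp continuous_snd)).prodMk
          (continuous_fst.mul (Real.continuous_sin.comp continuous_snd)))
      exact this.continuousOn
  have hprodmeas : (volume : Measure (ℝ × ℝ)).restrict s =
      (volume.restrict (Ioo (0:ℝ) R)).prod (volume.restrict (Ioo (0:ℝ) (2*Real.pi))) := by
    rw [hsdef, Measure.volume_eq_prod, Measure.prod_restrict]
  have hcm : ∀ r θ : ℝ, z + (r * Real.cos θ : ℝ) + (r * Real.sin θ : ℝ) * I = circleMap z r θ := by
    intro r θ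
    simp only [circleMap, Complex.ext_iff, Complex.add_re, Complex.add_im, Complex.ofReal_re,
      Complex.ofReal_im, Complex.mul_re, Complex.mul_im, Complex.I_re, Complex.I_im,
      Complex.exp_ofReal_mul_I_re, Complex.exp_ofReal_mul_I_im]
    constructor <;> ring
  -- lower bound
  have hlow : D * A ≤ ∫⁻ q in s, ENNReal.ofReal q.1 * G (polarCoord.symm q) := by
    have hsplit : ∫⁻ q in s, ENNReal.ofReal q.1 * G (polarCoord.symm q) =
        ∫⁻ r in Ioo (0:ℝ) R, ∫⁻ θ in Ioo (0:ℝ) (2*Real.pi),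
          ENNReal.ofReal r * G (polarCoord.symm (r, θ)) := by
      rw [hprodmeas]
      exact lintegral_prod _ (by rw [← hprodmeas]; exact hφmeas)
    rw [hsplit]
    have hinner : ∀ r ∈ Ioo (R/2) R, ENNReal.ofReal (R/2) * (ENNReal.ofReal (2*Real.pi) * A) ≤
        ∫⁻ θ in Ioo (0:ℝ) (2*Real.pi), ENNReal.ofReal r * G (polarCoord.symm (r, θ)) := by
      intro r hr
      simp only [mem_Ioo] at hr
      have hr0 : 0 < r := by nlinarith
      have heq : ∫⁻ θ in Ioo (0:ℝ) (2*Real.pi), ENNReal.ofReal r * G (polarCoord.symm (r, θ)) =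
          ENNReal.ofReal r * ∫⁻ θ in Ioc (0:ℝ) (2*Real.pi), H (circleMap z r θ) := by
        rw [← lintegral_const_mul' _ _ ENNReal.ofReal_ne_top,
          ← setLIntegral_congr (Ioo_ae_eq_Ioc (a := (0:ℝ)) (b := 2*Real.pi))]
        refine lintegral_congr fun θ => ?_
        congr 1
        rw [hGdef]
        simp only [hsymm_eq]
        exact congrArg H (hcm r θ)
      rw [heq]
      have hcirc := circle_step hp hg r ⟨hr0, hr.2⟩
      calc ENNReal.ofReal (R/2) * (ENNReal.ofReal (2*Real.pi) * A)
          ≤ ENNReal.ofReal r * (ENNReal.ofReal (2*Real.pi) * A) := by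
            exact mul_le_mul_left (ENNReal.ofReal_le_ofReal hr.1.le) _
        _ ≤ ENNReal.ofReal r * ∫⁻ θ in Ioc (0:ℝ) (2*Real.pi), H (circleMap z r θ) :=
            mul_le_mul_right hcirc _
    calc D * A = ENNReal.ofReal (R/2) *
          (ENNReal.ofReal (R/2) * (ENNReal.ofReal (2*Real.pi) * A)) := by
          rw [hDdef]; ring
      _ = ∫⁻ _ in Ioo (R/2) R, (ENNReal.ofReal (R/2) * (ENNReal.ofReal (2*Real.pi) * A)) := by
          rw [lintegral_const, Measure.restrict_apply MeasurableSet.univ, univ_inter,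
            Real.volume_Ioo, show R - R/2 = R/2 by ring, mul_comm]
      _ ≤ ∫⁻ r in Ioo (R/2) R, ∫⁻ θ in Ioo (0:ℝ) (2*Real.pi),
            ENNReal.ofReal r * G (polarCoord.symm (r, θ)) :=
          setLIntegral_mono' measurableSet_Ioo hinner
      _ ≤ ∫⁻ r in Ioo (0:ℝ) R, ∫⁻ θ in Ioo (0:ℝ) (2*Real.pi),
            ENNReal.ofReal r * G (polarCoord.symm (r, θ)) := by
          refine lintegral_mono' (Measure.restrict_mono ?_ le_rfl) le_rfl
          intro x hx
          simp only [mem_Ioo] at hx ⊢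
          exact ⟨by nlinarith [hx.1], hx.2⟩
  -- upper bound
  have hup : ∫⁻ x in polarCoord.symm '' s, G x ≤ ENNReal.ofReal (2*R) * M := by
    have himg : polarCoord.symm '' s ⊆ univ ×ˢ Ioo (-R) R := by
      rintro x ⟨q, hq, rfl⟩
      exact hmaps q hq
    have hstripmeas : (volume : Measure (ℝ × ℝ)).restrict (univ ×ˢ Ioo (-R) R) =
        volume.prod (volume.restrict (Ioo (-R) R)) := by
      conv_rhs => rw [show (volume : Measure ℝ) = volume.restrict univ from (Measure.restrict_univ).symm]
      rw [Measure.prod_restrict, Measure.volume_eq_prod, Measure.restrict_univ]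
    have hGmeas : AEMeasurable G (volume.prod (volume.restrict (Ioo (-R) R))) := by
      rw [← hstripmeas]
      exact hGcont.aemeasurable (MeasurableSet.univ.prod measurableSet_Ioo)
    have hinner2 : ∀ v ∈ Ioo (-R) R, (∫⁻ u : ℝ, G (u, v)) ≤ M := by
      intro v hv
      simp only [mem_Ioo] at hv
      have hy : 0 < z.im + v := by simp only [hRdef] at hv; nlinarith [hv.1]
      set K : ℝ → ENNReal := fun x =>
        ENNReal.ofReal (‖g ((x : ℂ) + ((z.im + v : ℝ) : ℂ) * I)‖ ^ p) with hKdef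
      have hKcont : Continuous K := by
        rw [← continuousOn_univ]
        refine hHcont.comp ?_ ?_
        · exact (Complex.continuous_ofReal.add continuous_const).continuousOn
        · intro x _
          simp only [Set.mem_setOf_eq, Complex.add_im, Complex.ofReal_im, Complex.mul_im,
            Complex.ofReal_re, Complex.I_im, Complex.I_re, Complex.ofReal_im]
          simpa using hy
      have hGK : ∀ u : ℝ, G (u, v) = K (u + z.re) := by
        intro u
        rw [hGdef, hKdef]
        refine congrArg (fun w => ENNReal.ofReal (‖g w‖ ^ p)) ?_
        simp only [Complex.ext_iff, Complex.add_re, Complex.add_im, Complex.ofReal_re,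
          Complex.ofReal_im, Complex.mul_re, Complex.mul_im, Complex.I_re, Complex.I_im]
        constructor <;> ring
      calc (∫⁻ u : ℝ, G (u, v)) = ∫⁻ u : ℝ, K (u + z.re) := lintegral_congr hGK
        _ = ∫⁻ x : ℝ, K x := (measurePreserving_add_right volume z.re).lintegral_comp
            hKcont.measurable
        _ ≤ M := by
          rw [hMdef]
          unfold hNormPow
          exact le_biSup
            (f := fun y : ℝ => ∫⁻ x : ℝ,
              ENNReal.ofReal (‖g ((x : ℂ) + (y : ℂ) * Complex.I)‖ ^ p))
            (Set.mem_Ioi.mpr hy)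
    calc ∫⁻ x in polarCoord.symm '' s, G x ≤ ∫⁻ x in univ ×ˢ Ioo (-R) R, G x :=
        lintegral_mono' (Measure.restrict_mono himg le_rfl) le_rfl
      _ = ∫⁻ v in Ioo (-R) R, ∫⁻ u : ℝ, G (u, v) := by
        rw [hstripmeas]
        exact lintegral_prod_symm _ hGmeas
      _ ≤ ∫⁻ _ in Ioo (-R) R, M := setLIntegral_mono' measurableSet_Ioo hinner2
      _ = ENNReal.ofReal (2*R) * M := by
        rw [lintegral_const, Measure.restrict_apply MeasurableSet.univ, univ_inter,
          Real.volume_Ioo, show R - (-R) = 2*R by ring, mul_comm]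
  -- conclude
  have hfinal : D * A ≤ ENNReal.ofReal (2*R) * M := by
    calc D * A ≤ ∫⁻ q in s, ENNReal.ofReal q.1 * G (polarCoord.symm q) := hlow
      _ = ∫⁻ x in polarCoord.symm '' s, G x := hCoV'.symm
      _ ≤ ENNReal.ofReal (2*R) * M := hup
  calc A = D⁻¹ * (D * A) := by rw [← mul_assoc, ENNReal.inv_mul_cancel hD0 hDT, one_mul]
    _ ≤ D⁻¹ * (ENNReal.ofReal (2*R) * M) := mul_le_mul_right hfinal _
    _ = (D⁻¹ * ENNReal.ofReal (2*R)) * M := by rw [mul_assoc]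

end PB2

lemma two_rpow_bound {p a b : ℝ} (hp : 1 ≤ p) (ha : 0 ≤ a) (hb : 0 ≤ b) :
    (a + b) ^ p ≤ (2:ℝ) ^ p * (a ^ p + b ^ p) := by
  have hp0 : (0:ℝ) < p := lt_of_lt_of_le one_pos hp
  have h1 : a + b ≤ 2 * max a b := by
    rcases le_total a b with h | h
    · rw [max_eq_right h]; linarith
    · rw [max_eq_left h]; linarith
  have h2 : (a + b) ^ p ≤ (2 * max a b) ^ p :=
    Real.rpow_le_rpow (by positivity) h1 hp0.le
  have h3 : (2 * max a b) ^ p = 2 ^ p * (max a b) ^ p :=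
    Real.mul_rpow (by norm_num) (le_max_of_le_left ha)
  have h4 : (max a b) ^ p ≤ a ^ p + b ^ p := by
    rcases le_total a b with h | h
    · rw [max_eq_right h]
      have : (0:ℝ) ≤ a ^ p := Real.rpow_nonneg ha p
      linarith
    · rw [max_eq_left h]
      have : (0:ℝ) ≤ b ^ p := Real.rpow_nonneg hb p
      linarith
  calc (a + b) ^ p ≤ 2 ^ p * (max a b) ^ p := by rw [← h3]; exact h2
    _ ≤ 2 ^ p * (a ^ p + b ^ p) := by
      have : (0:ℝ) ≤ (2:ℝ) ^ p := Real.rpow_nonneg (by norm_num) p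
      nlinarith

/-- if `f ∈ H^p(𝕌)` and `‖(T_t(f) − f)/t − F‖_p → 0` as `t → 0` for some
`F ∈ H^p(𝕌)`, then `z f′(z) ∈ H^p(𝕌)` and `F(z) = −z f′(z) − (1/p) f(z)` on `𝕌`. -/
theorem generator_domain_necessary (p : ℝ) (hp : 1 ≤ p) (f F : ℂ → ℂ) (hf : MemHp p f)
    (hF : MemHp p F)
    (hlim : Tendsto (fun t : ℝ =>
        hNorm p (fun z =>
          ((Real.exp (-t / p) : ℂ) * f ((Real.exp (-t) : ℂ) * z) - f z) / (t : ℂ) - F z))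
      (𝓝[≠] (0 : ℝ)) (𝓝 0)) :
    MemHp p (fun z => z * deriv f z) ∧
      ∀ z : ℂ, 0 < z.im → F z = -(z * deriv f z) - (1 / (p : ℂ)) * f z := by
  have hp0 : (0:ℝ) < p := lt_of_lt_of_le one_pos hp
  set U : Set ℂ := {w : ℂ | 0 < w.im} with hU
  set gT : ℝ → ℂ → ℂ := fun t z =>
    ((Real.exp (-t / p) : ℂ) * f ((Real.exp (-t) : ℂ) * z) - f z) / (t : ℂ) - F z with hgT
  -- each gT t is differentiable on U
  have hdiffT : ∀ t : ℝ, DifferentiableOn ℂ (gT t) U := by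
    intro t
    have hmaps : ∀ z ∈ U, (Real.exp (-t) : ℂ) * z ∈ U := by
      intro z hz
      simp only [hU, Set.mem_setOf_eq] at hz ⊢
      rw [Complex.im_ofReal_mul]
      positivity
    have h1 : DifferentiableOn ℂ (fun z => f ((Real.exp (-t) : ℂ) * z)) U := by
      refine DifferentiableOn.comp hf.1 ?_ hmaps
      exact ((differentiable_id).const_mul ((Real.exp (-t) : ℝ) : ℂ)).differentiableOn
    exact (((h1.const_mul _).sub hf.1).div_const _).sub hF.1
  -- hNormPow of gT tends to zero
  have hM : Tendsto (fun t => hNormPow p (gT t)) (𝓝[≠] (0:ℝ)) (𝓝 0) := by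
    have h1 : ∀ t, hNormPow p (gT t) = (hNorm p (gT t)) ^ p := by
      intro t
      rw [hNorm, ← ENNReal.rpow_mul, one_div, inv_mul_cancel₀ hp0.ne', ENNReal.rpow_one]
    simp only [h1]
    have h2 : Tendsto (fun x : ENNReal => x ^ p) (𝓝 0) (𝓝 ((0:ENNReal) ^ p)) :=
      ENNReal.continuous_rpow_const.tendsto 0
    rw [ENNReal.zero_rpow_of_pos hp0] at h2
    exact h2.comp hlim
  -- pointwise convergence of gT · z to 0
  have hpt : ∀ z : ℂ, 0 < z.im → Tendsto (fun t => gT t z) (𝓝[≠] (0:ℝ)) (𝓝 0) := by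
    intro z hz
    obtain ⟨C, hCT, hC⟩ := pointwise_bound hp hz
    have hbd : ∀ t, ENNReal.ofReal (‖gT t z‖ ^ p) ≤ C * hNormPow p (gT t) :=
      fun t => hC (gT t) (hdiffT t)
    have hCM : Tendsto (fun t => C * hNormPow p (gT t)) (𝓝[≠] (0:ℝ)) (𝓝 0) := by
      have := ENNReal.Tendsto.const_mul (a := C) hM (Or.inr hCT)
      simpa using this
    have hA : Tendsto (fun t => ENNReal.ofReal (‖gT t z‖ ^ p))
        (𝓝[≠] (0:ℝ)) (𝓝 0) :=
      tendsto_of_tendsto_of_tendsto_of_le_of_le tendsto_const_nhds hCM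
        (fun t => by positivity) hbd
    have hAr : Tendsto (fun t => ‖gT t z‖ ^ p) (𝓝[≠] (0:ℝ)) (𝓝 0) := by
      have h2 := (ENNReal.tendsto_toReal (a := 0) (by simp)).comp hA
      simp only [Function.comp_def, ENNReal.toReal_ofReal
        (Real.rpow_nonneg (norm_nonneg _) p), ENNReal.toReal_zero] at h2
      exact h2
    have habs : Tendsto (fun t => ‖gT t z‖) (𝓝[≠] (0:ℝ)) (𝓝 0) := by
      have hcont : Continuous fun x : ℝ => x ^ (1/p) :=
        continuous_iff_continuousAt.mpr fun t =>
          Real.continuousAt_rpow_const t _ (Or.inr (by positivity))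
      have h3 := (hcont.tendsto 0).comp hAr
      simp only [Function.comp_def, Real.zero_rpow (by positivity : (1:ℝ)/p ≠ 0)] at h3
      have h4 : ∀ t, (‖gT t z‖ ^ p) ^ (1/p) = ‖gT t z‖ := by
        intro t
        rw [one_div, Real.rpow_rpow_inv (norm_nonneg _) hp0.ne']
      simpa only [h4] using h3
    rw [tendsto_zero_iff_norm_tendsto_zero]
    simpa using habs
  -- identification of the limit
  have hkey : ∀ z : ℂ, 0 < z.im → F z = -(z * deriv f z) - (1 / (p : ℂ)) * f z := by
    intro z hz
    have hfz : HasDerivAt f (deriv f z) z :=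
      (hf.1.differentiableAt (upperHalf_open.mem_nhds hz)).hasDerivAt
    -- derivative of t ↦ exp(-t/p) (real), coerced
    have hc : HasDerivAt (fun t : ℝ => ((Real.exp (-t / p) : ℝ) : ℂ)) ((-1/p : ℝ) : ℂ) 0 := by
      have h1 : HasDerivAt (fun t : ℝ => -t / p) (-1/p) 0 := by
        simpa using ((hasDerivAt_id (0:ℝ)).neg.div_const p)
      have h2 : HasDerivAt (fun t : ℝ => Real.exp (-t / p)) (-1/p) 0 := by
        have := (Real.hasDerivAt_exp (-(0:ℝ)/p)).comp 0 h1
        simpa [Function.comp_def] using this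
      exact h2.ofReal_comp
    -- derivative of t ↦ exp(-t) * z
    have hm : HasDerivAt (fun t : ℝ => (Real.exp (-t) : ℂ) * z) (-z) 0 := by
      have h1 : HasDerivAt (fun t : ℝ => -t) (-1 : ℝ) 0 := by
        simpa [Pi.neg_def] using (hasDerivAt_id (0:ℝ)).neg
      have h2 : HasDerivAt (fun t : ℝ => Real.exp (-t)) (-1) 0 := by
        have := (Real.hasDerivAt_exp (-(0:ℝ))).comp 0 h1
        simpa [Function.comp_def] using this
      have h3 : HasDerivAt (fun t : ℝ => ((Real.exp (-t) : ℝ) : ℂ)) ((-1 : ℝ) : ℂ) 0 :=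
        h2.ofReal_comp
      have := h3.mul_const z
      simpa using this
    -- derivative of the composition
    have hcomp : HasDerivAt (fun t : ℝ => f ((Real.exp (-t) : ℂ) * z)) (-z * deriv f z) 0 := by
      have hfz' : HasDerivAt f (deriv f z) ((fun t : ℝ => (Real.exp (-t) : ℂ) * z) 0) := by
        simpa using hfz
      have := hfz'.scomp (x := (0:ℝ)) hm
      simpa [smul_eq_mul, Function.comp_def] using this
    -- product
    have hprod : HasDerivAt (fun t : ℝ => (Real.exp (-t / p) : ℂ) * f ((Real.exp (-t) : ℂ) * z))
        (((-1/p : ℝ) : ℂ) * f z + -z * deriv f z) 0 := by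
      have h5 := hc.mul hcomp
      convert h5 using 1
      · rfl
      · rfl
      simp only [neg_zero, zero_div, Real.exp_zero, Complex.ofReal_one, one_mul]
    -- slope convergence
    have hslope := hasDerivAt_iff_tendsto_slope.mp hprod
    have hslope_eq : (slope (fun t : ℝ => (Real.exp (-t / p) : ℂ) * f ((Real.exp (-t) : ℂ) * z)) 0)
        = fun t : ℝ => ((Real.exp (-t / p) : ℂ) * f ((Real.exp (-t) : ℂ) * z) - f z) / (t : ℂ) := by
      funext t
      rw [slope_def_module]
      simp only [sub_zero, neg_zero, zero_div, Real.exp_zero, Complex.ofReal_one, one_mul]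
      rw [Complex.real_smul, Complex.ofReal_inv]
      ring
    rw [hslope_eq] at hslope
    -- from hpt: the same quotient tends to F z
    have hpt' : Tendsto (fun t : ℝ =>
        ((Real.exp (-t / p) : ℂ) * f ((Real.exp (-t) : ℂ) * z) - f z) / (t : ℂ))
        (𝓝[≠] (0:ℝ)) (𝓝 (F z)) := by
      have := (hpt z hz).add (tendsto_const_nhds (x := F z))
      simp only [hgT] at this
      simpa using this
    have := tendsto_nhds_unique hpt' hslope
    rw [this]
    push_cast
    ring
  refine ⟨⟨?_, ?_⟩, hkey⟩
  · -- differentiability of z * deriv f z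
    have hAn : AnalyticOnNhd ℂ f U := hf.1.analyticOnNhd upperHalf_open
    exact differentiableOn_id.mul hAn.deriv.differentiableOn
  · -- finiteness of the Hardy norm of z * deriv f z
    have hbd : ∀ w : ℂ, 0 < w.im →
        ENNReal.ofReal (‖w * deriv f w‖ ^ p) ≤
          ENNReal.ofReal ((2:ℝ) ^ p) *
            (ENNReal.ofReal (‖F w‖ ^ p) + ENNReal.ofReal (‖f w‖ ^ p)) := by
      intro w hw
      have heq : w * deriv f w = -F w - (1/(p:ℂ)) * f w := by
        have := hkey w hw
        rw [this]; ring
      have h1 : ‖w * deriv f w‖ ≤ ‖F w‖ + ‖f w‖ := by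
        rw [heq]
        calc ‖-F w - (1/(p:ℂ)) * f w‖ ≤
            ‖-F w‖ + ‖(1/(p:ℂ)) * f w‖ := norm_sub_le _ _
          _ ≤ ‖F w‖ + ‖f w‖ := by
            rw [norm_neg, norm_mul]
            have h2 : ‖1/(p:ℂ)‖ ≤ 1 := by
              rw [norm_div, norm_one, Complex.norm_real, Real.norm_eq_abs, abs_of_pos hp0]
              rw [div_le_one hp0]
              exact hp
            nlinarith [norm_nonneg (f w), norm_nonneg (F w),
              norm_nonneg ((1:ℂ)/(p:ℂ))]
      calc ENNReal.ofReal (‖w * deriv f w‖ ^ p)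
          ≤ ENNReal.ofReal ((‖F w‖ + ‖f w‖) ^ p) :=
            ENNReal.ofReal_le_ofReal
              (Real.rpow_le_rpow (norm_nonneg _) h1 hp0.le)
        _ ≤ ENNReal.ofReal ((2:ℝ)^p * (‖F w‖ ^ p + ‖f w‖ ^ p)) :=
            ENNReal.ofReal_le_ofReal
              (two_rpow_bound hp (norm_nonneg _) (norm_nonneg _))
        _ = ENNReal.ofReal ((2:ℝ)^p) *
            (ENNReal.ofReal (‖F w‖ ^ p) + ENNReal.ofReal (‖f w‖ ^ p)) := by
            rw [ENNReal.ofReal_mul (Real.rpow_nonneg (by norm_num) p), ENNReal.ofReal_add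
              (Real.rpow_nonneg (norm_nonneg _) p)
              (Real.rpow_nonneg (norm_nonneg _) p)]
    have hfin : hNormPow p (fun w => w * deriv f w) ≤
        ENNReal.ofReal ((2:ℝ)^p) * (hNormPow p F + hNormPow p f) := by
      rw [hNormPow]
      refine iSup₂_le fun y hy => ?_
      rw [Set.mem_Ioi] at hy
      have hmemline : ∀ x : ℝ, ((x:ℂ) + (y:ℂ) * I).im = y := by
        intro x; simp
      have hFmeas : Measurable fun x : ℝ => ENNReal.ofReal (‖F ((x:ℂ) + (y:ℂ) * I)‖ ^ p) := by
        have hline : Continuous fun x : ℝ => (x:ℂ) + (y:ℂ) * I :=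
          Complex.continuous_ofReal.add continuous_const
        have hFc : Continuous fun x : ℝ => F ((x:ℂ) + (y:ℂ) * I) := by
          rw [← continuousOn_univ]
          exact hF.1.continuousOn.comp hline.continuousOn fun x _ => by
            simp only [hU, Set.mem_setOf_eq, hmemline]; exact hy
        have hrpow : Continuous fun t : ℝ => t ^ p :=
          continuous_iff_continuousAt.mpr fun t => Real.continuousAt_rpow_const t p (Or.inr hp0.le)
        exact (ENNReal.continuous_ofReal.comp
          (hrpow.comp (continuous_norm.comp hFc))).measurable
      calc (∫⁻ x : ℝ, ENNReal.ofReal (‖((x:ℂ) + (y:ℂ) * I) * deriv f ((x:ℂ) + (y:ℂ) * I)‖ ^ p))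
          ≤ ∫⁻ x : ℝ, ENNReal.ofReal ((2:ℝ)^p) *
              (ENNReal.ofReal (‖F ((x:ℂ) + (y:ℂ) * I)‖ ^ p) +
               ENNReal.ofReal (‖f ((x:ℂ) + (y:ℂ) * I)‖ ^ p)) :=
            lintegral_mono fun x => hbd _ (by rw [hmemline]; exact hy)
        _ = ENNReal.ofReal ((2:ℝ)^p) *
            ((∫⁻ x : ℝ, ENNReal.ofReal (‖F ((x:ℂ) + (y:ℂ) * I)‖ ^ p)) +
             (∫⁻ x : ℝ, ENNReal.ofReal (‖f ((x:ℂ) + (y:ℂ) * I)‖ ^ p))) := by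
            rw [lintegral_const_mul' _ _ ENNReal.ofReal_ne_top, lintegral_add_left hFmeas]
        _ ≤ ENNReal.ofReal ((2:ℝ)^p) * (hNormPow p F + hNormPow p f) := by
            refine mul_le_mul_right (add_le_add ?_ ?_) _
            · show _ ≤ hNormPow p F
              unfold hNormPow
              exact le_biSup (f := fun y : ℝ => ∫⁻ x : ℝ,
                ENNReal.ofReal (‖F ((x:ℂ) + (y:ℂ) * Complex.I)‖ ^ p))
                (Set.mem_Ioi.mpr hy)
            · show _ ≤ hNormPow p f
              unfold hNormPow
              exact le_biSup (f := fun y : ℝ => ∫⁻ x : ℝ,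
                ENNReal.ofReal (‖f ((x:ℂ) + (y:ℂ) * Complex.I)‖ ^ p))
                (Set.mem_Ioi.mpr hy)
    refine lt_of_le_of_lt hfin ?_
    exact ENNReal.mul_lt_top (by simp [ENNReal.ofReal_lt_top])
      (ENNReal.add_lt_top.mpr ⟨hF.2, hf.2⟩)
end

section
/- Let 0 < p < ∞ and λ ∈ ℂ. The function h_λ(z) = (i+z)^λ (defined on 𝕌 using the principal branch of the logarithm; note i+z lies in the upper half-plane when z ∈ 𝕌) belongs to H^p(𝕌) if and only if Re(λ) < −1/p. -/
open Complex MeasureTheory Filter Topology Bornology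

section AuxHp

private lemma w_ne_zero (x y : ℝ) (hy : 0 < y) :
    (Complex.I + ((x : ℂ) + (y : ℂ) * Complex.I)) ≠ 0 := by
  intro h
  have him : (Complex.I + ((x : ℂ) + (y : ℂ) * Complex.I)).im = 1 + y := by simp
  rw [h] at him
  simp at him
  linarith

private lemma abs_pow_eq (p : ℝ) (hp : 0 < p) (l : ℂ) (x y : ℝ) (hy : 0 < y) :
    ‖(Complex.I + ((x : ℂ) + (y : ℂ) * Complex.I)) ^ l‖ ^ p
      = (x ^ 2 + (1 + y) ^ 2) ^ (p * l.re / 2)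
        / Real.exp (((Complex.I + ((x : ℂ) + (y : ℂ) * Complex.I)).arg * l.im) * p) := by
  set w := Complex.I + ((x : ℂ) + (y : ℂ) * Complex.I) with hw
  have hre : w.re = x := by simp [hw]
  have him : w.im = 1 + y := by simp [hw]
  have hs : (0:ℝ) < x ^ 2 + (1 + y) ^ 2 := by positivity
  have habs : ‖w‖ = (x ^ 2 + (1 + y) ^ 2) ^ ((1:ℝ)/2) := by
    rw [Complex.norm_def, Complex.normSq_apply, hre, him, ← Real.sqrt_eq_rpow]
    ring_nf
  rw [Complex.norm_cpow_of_ne_zero (w_ne_zero x y hy) l,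
    Real.div_rpow (Real.rpow_nonneg (norm_nonneg w) _) (Real.exp_nonneg _),
    ← Real.exp_mul, ← Real.rpow_mul (norm_nonneg w), habs,
    ← Real.rpow_mul hs.le]
  rw [show (1:ℝ)/2 * (l.re * p) = p * l.re / 2 by ring]

private lemma abs_pow_le (p : ℝ) (hp : 0 < p) (l : ℂ) (x y : ℝ) (hy : 0 < y) :
    ‖(Complex.I + ((x : ℂ) + (y : ℂ) * Complex.I)) ^ l‖ ^ p
      ≤ Real.exp (Real.pi * |l.im| * p) * (x ^ 2 + (1 + y) ^ 2) ^ (p * l.re / 2) := by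
  rw [abs_pow_eq p hp l x y hy]
  have hs : (0:ℝ) ≤ (x ^ 2 + (1 + y) ^ 2) ^ (p * l.re / 2) := Real.rpow_nonneg (by positivity) _
  have harg : |((Complex.I + ((x : ℂ) + (y : ℂ) * Complex.I)).arg * l.im) * p|
      ≤ Real.pi * |l.im| * p := by
    rw [abs_mul, abs_mul, abs_of_pos hp]
    exact mul_le_mul_of_nonneg_right
      (mul_le_mul_of_nonneg_right (Complex.abs_arg_le_pi _) (abs_nonneg _)) hp.le
  have h1 : Real.exp (-(Real.pi * |l.im| * p))
      ≤ Real.exp (((Complex.I + ((x : ℂ) + (y : ℂ) * Complex.I)).arg * l.im) * p) := by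
    apply Real.exp_le_exp.mpr
    have := neg_abs_le (((Complex.I + ((x : ℂ) + (y : ℂ) * Complex.I)).arg * l.im) * p)
    linarith
  calc _ ≤ (x ^ 2 + (1 + y) ^ 2) ^ (p * l.re / 2) / Real.exp (-(Real.pi * |l.im| * p)) := by
        apply div_le_div_of_nonneg_left hs (Real.exp_pos _) h1
    _ = Real.exp (Real.pi * |l.im| * p) * (x ^ 2 + (1 + y) ^ 2) ^ (p * l.re / 2) := by
        rw [Real.exp_neg, div_eq_mul_inv, inv_inv, mul_comm]

private lemma le_abs_pow (p : ℝ) (hp : 0 < p) (l : ℂ) (x y : ℝ) (hy : 0 < y) :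
    (Real.exp (Real.pi * |l.im| * p))⁻¹ * (x ^ 2 + (1 + y) ^ 2) ^ (p * l.re / 2)
      ≤ ‖(Complex.I + ((x : ℂ) + (y : ℂ) * Complex.I)) ^ l‖ ^ p := by
  rw [abs_pow_eq p hp l x y hy]
  have hs : (0:ℝ) ≤ (x ^ 2 + (1 + y) ^ 2) ^ (p * l.re / 2) := Real.rpow_nonneg (by positivity) _
  have harg : |((Complex.I + ((x : ℂ) + (y : ℂ) * Complex.I)).arg * l.im) * p|
      ≤ Real.pi * |l.im| * p := by
    rw [abs_mul, abs_mul, abs_of_pos hp]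
    exact mul_le_mul_of_nonneg_right
      (mul_le_mul_of_nonneg_right (Complex.abs_arg_le_pi _) (abs_nonneg _)) hp.le
  have h1 : Real.exp (((Complex.I + ((x : ℂ) + (y : ℂ) * Complex.I)).arg * l.im) * p)
      ≤ Real.exp (Real.pi * |l.im| * p) := by
    apply Real.exp_le_exp.mpr
    have := le_abs_self (((Complex.I + ((x : ℂ) + (y : ℂ) * Complex.I)).arg * l.im) * p)
    linarith
  calc (Real.exp (Real.pi * |l.im| * p))⁻¹ * (x ^ 2 + (1 + y) ^ 2) ^ (p * l.re / 2)
      = (x ^ 2 + (1 + y) ^ 2) ^ (p * l.re / 2) / Real.exp (Real.pi * |l.im| * p) :=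
        (mul_comm _ _).trans (div_eq_mul_inv _ _).symm
    _ ≤ _ := div_le_div_of_nonneg_left hs (Real.exp_pos _) h1

private lemma lint_lt_top {a : ℝ} (ha : a < -1) :
    ∫⁻ x : ℝ, ENNReal.ofReal ((x ^ 2 + 1) ^ (a/2)) < ⊤ := by
  have hnr : ((Module.finrank ℝ ℝ : ℕ) : ℝ) < -a := by
    simp only [Module.finrank_self, Nat.cast_one]
    linarith
  have hint : Integrable (fun x : ℝ => ((1:ℝ) + ‖x‖ ^ 2) ^ (-(-a)/2)) :=
    integrable_rpow_neg_one_add_norm_sq hnr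
  have heq : (fun x : ℝ => ((1:ℝ) + ‖x‖ ^ 2) ^ (-(-a)/2))
      = fun x : ℝ => (x ^ 2 + 1) ^ (a/2) := by
    funext x
    rw [Real.norm_eq_abs, _root_.sq_abs, neg_neg, add_comm]
  rw [heq] at hint
  have := hint.hasFiniteIntegral
  rwa [hasFiniteIntegral_iff_ofReal
    (ae_of_all _ fun x => Real.rpow_nonneg (by positivity) _)] at this

private lemma lint_Ioi_inv_eq_top : ∫⁻ x in Set.Ioi (1:ℝ), ENNReal.ofReal x⁻¹ = ⊤ := by
  by_contra hfin
  have hlt : ∫⁻ x in Set.Ioi (1:ℝ), ENNReal.ofReal x⁻¹ < ⊤ := lt_top_iff_ne_top.mpr hfin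
  have hnn : (0:ℝ → ℝ) ≤ᵐ[volume.restrict (Set.Ioi (1:ℝ))] (fun x : ℝ => x⁻¹) := by
    filter_upwards [ae_restrict_mem measurableSet_Ioi] with x hx
    exact inv_nonneg.mpr (by linarith [Set.mem_Ioi.mp hx])
  have hInt : IntegrableOn (fun x : ℝ => x⁻¹) (Set.Ioi (1:ℝ)) := by
    refine ⟨(measurable_inv).aestronglyMeasurable, ?_⟩
    rwa [hasFiniteIntegral_iff_ofReal hnn]
  have hInt' : IntegrableOn (fun x : ℝ => x ^ (-1 : ℝ)) (Set.Ioi (1:ℝ)) := by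
    refine hInt.congr_fun (fun x hx => ?_) measurableSet_Ioi
    exact (Real.rpow_neg_one x).symm
  have := (integrableOn_Ioi_rpow_iff one_pos).mp hInt'
  linarith

private lemma lint_eq_top {a : ℝ} (ha : -1 ≤ a) :
    ∫⁻ x : ℝ, ENNReal.ofReal ((x ^ 2 + 4) ^ (a/2)) = ⊤ := by
  rw [eq_top_iff]
  have hpt : ∀ x ∈ Set.Ioi (1:ℝ),
      (5:ℝ) ^ (-(1/2) : ℝ) * x⁻¹ ≤ (x ^ 2 + 4) ^ (a/2) := by
    intro x hx
    have hx1 : (1:ℝ) < x := Set.mem_Ioi.mp hx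
    have hx0 : (0:ℝ) < x := by linarith
    have h1 : (5:ℝ) ^ (-(1/2) : ℝ) * x⁻¹ = ((5:ℝ) * x ^ 2) ^ (-(1/2) : ℝ) := by
      rw [Real.mul_rpow (by norm_num) (by positivity)]
      congr 1
      rw [← Real.rpow_natCast x 2, ← Real.rpow_mul hx0.le]
      norm_num
      rw [Real.rpow_neg_one]
    have h2 : ((5:ℝ) * x ^ 2) ^ (-(1/2) : ℝ) ≤ (x ^ 2 + 4) ^ (-(1/2) : ℝ) := by
      apply Real.rpow_le_rpow_of_nonpos (by positivity) (by nlinarith) (by norm_num)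
    have h3 : (x ^ 2 + 4) ^ (-(1/2) : ℝ) ≤ (x ^ 2 + 4) ^ (a/2) := by
      apply Real.rpow_le_rpow_of_exponent_le (by nlinarith) (by linarith)
    rw [h1]
    exact h2.trans h3
  calc (⊤ : ENNReal)
      = ENNReal.ofReal ((5:ℝ) ^ (-(1/2) : ℝ)) * ∫⁻ x in Set.Ioi (1:ℝ), ENNReal.ofReal x⁻¹ := by
        rw [lint_Ioi_inv_eq_top, ENNReal.mul_top]
        exact ne_of_gt (ENNReal.ofReal_pos.mpr (Real.rpow_pos_of_pos (by norm_num) _))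
    _ = ∫⁻ x in Set.Ioi (1:ℝ), ENNReal.ofReal ((5:ℝ) ^ (-(1/2) : ℝ) * x⁻¹) := by
        rw [← lintegral_const_mul' _ _ ENNReal.ofReal_ne_top]
        congr 1
        funext x
        rw [ENNReal.ofReal_mul (Real.rpow_nonneg (by norm_num) _)]
    _ ≤ ∫⁻ x in Set.Ioi (1:ℝ), ENNReal.ofReal ((x ^ 2 + 4) ^ (a/2)) := by
        apply setLIntegral_mono' measurableSet_Ioi
        intro x hx
        exact ENNReal.ofReal_le_ofReal (hpt x hx)
    _ ≤ ∫⁻ x : ℝ, ENNReal.ofReal ((x ^ 2 + 4) ^ (a/2)) := setLIntegral_le_lintegral _ _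

end AuxHp

/-- for `0 < p < ∞` and `λ ∈ ℂ`, the function `h_λ(z) = (i+z)^λ`
(principal branch) belongs to `H^p(𝕌)` if and only if `Re(λ) < −1/p`. -/
theorem iAdd_pow_mem_Hp_iff (p : ℝ) (hp : 0 < p) (l : ℂ) :
    MemHp p (fun z => (Complex.I + z) ^ l) ↔ l.re < -(1 / p) := by
  have hE : (0:ℝ) < Real.exp (Real.pi * |l.im| * p) := Real.exp_pos _
  constructor
  · intro h
    by_contra hc
    push_neg at hc
    have ha : -1 ≤ p * l.re := by
      have := mul_le_mul_of_nonneg_left hc hp.le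
      have hpp : p * -(1/p) = -1 := by field_simp
      linarith
    have htop : hNormPow p (fun z => (Complex.I + z) ^ l) = ⊤ := by
      rw [eq_top_iff]
      have hle : (⊤ : ENNReal) ≤ ∫⁻ x : ℝ,
          ENNReal.ofReal (‖(fun z => (Complex.I + z) ^ l)
            ((x : ℂ) + ((1:ℝ) : ℂ) * Complex.I)‖ ^ p) := by
        calc (⊤ : ENNReal)
            = ENNReal.ofReal ((Real.exp (Real.pi * |l.im| * p))⁻¹)
              * ∫⁻ x : ℝ, ENNReal.ofReal ((x ^ 2 + 4) ^ (p * l.re / 2)) := by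
              rw [lint_eq_top ha, ENNReal.mul_top]
              exact ne_of_gt (ENNReal.ofReal_pos.mpr (inv_pos.mpr hE))
          _ = ∫⁻ x : ℝ, ENNReal.ofReal
              ((Real.exp (Real.pi * |l.im| * p))⁻¹ * (x ^ 2 + 4) ^ (p * l.re / 2)) := by
              rw [← lintegral_const_mul' _ _ ENNReal.ofReal_ne_top]
              congr 1
              funext x
              rw [ENNReal.ofReal_mul (inv_nonneg.mpr hE.le)]
          _ ≤ _ := by
              apply lintegral_mono
              intro x
              apply ENNReal.ofReal_le_ofReal
              have := le_abs_pow p hp l x 1 one_pos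
              norm_num at this ⊢
              exact this
      refine le_trans hle ?_
      have h1 : ((1:ℝ)) ∈ Set.Ioi (0:ℝ) := by norm_num
      exact le_iSup₂ (f := fun y (_ : y ∈ Set.Ioi (0:ℝ)) => ∫⁻ x : ℝ,
        ENNReal.ofReal (‖(fun z => (Complex.I + z) ^ l)
          ((x : ℂ) + (y : ℂ) * Complex.I)‖ ^ p)) (1:ℝ) h1
    exact absurd htop h.2.ne
  · intro hl
    have ha : p * l.re < -1 := by
      have := mul_lt_mul_of_pos_left hl hp
      have hpp : p * -(1/p) = -1 := by field_simp
      linarith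
    constructor
    · intro z hz
      apply DifferentiableAt.differentiableWithinAt
      apply DifferentiableAt.cpow (by fun_prop) (differentiableAt_const l)
      rw [Complex.mem_slitPlane_iff]
      right
      have : (Complex.I + z).im = 1 + z.im := by simp
      rw [this]
      have : (0:ℝ) < z.im := hz
      positivity
    · have hbound : hNormPow p (fun z => (Complex.I + z) ^ l)
          ≤ ENNReal.ofReal (Real.exp (Real.pi * |l.im| * p))
            * ∫⁻ x : ℝ, ENNReal.ofReal ((x ^ 2 + 1) ^ (p * l.re / 2)) := by
        apply iSup₂_le
        intro y hy
        have hy0 : (0:ℝ) < y := hy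
        calc (∫⁻ x : ℝ, ENNReal.ofReal (‖(fun z => (Complex.I + z) ^ l)
              ((x : ℂ) + (y : ℂ) * Complex.I)‖ ^ p))
            ≤ ∫⁻ x : ℝ, ENNReal.ofReal
                (Real.exp (Real.pi * |l.im| * p) * (x ^ 2 + 1) ^ (p * l.re / 2)) := by
              apply lintegral_mono
              intro x
              apply ENNReal.ofReal_le_ofReal
              refine le_trans (abs_pow_le p hp l x y hy0) ?_
              gcongr _ * ?_
              apply Real.rpow_le_rpow_of_nonpos (by positivity) (by nlinarith) (by linarith)
          _ = ENNReal.ofReal (Real.exp (Real.pi * |l.im| * p))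
              * ∫⁻ x : ℝ, ENNReal.ofReal ((x ^ 2 + 1) ^ (p * l.re / 2)) := by
              rw [← lintegral_const_mul' _ _ ENNReal.ofReal_ne_top]
              congr 1
              funext x
              rw [ENNReal.ofReal_mul hE.le]
      refine lt_of_le_of_lt hbound ?_
      exact ENNReal.mul_lt_top ENNReal.ofReal_lt_top (lint_lt_top ha)
end

section
/- Let 1 ≤ p < ∞ and γ ∈ ℂ. If f ∈ H^p(𝕌) satisfies −z f′(z) − (1/p) f(z) = γ f(z) for all z ∈ 𝕌, then f is identically zero. (In other words, the generator Γ(f)(z) = −z f′(z) − (1/p) f(z) of the group T_t(f)(z) = e^{-t/p} f(e^{-t} z) has no eigenvalues on H^p(𝕌).) -/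
open Complex MeasureTheory Filter Topology Bornology

/-- the generator `Γ(f)(z) = −z f′(z) − (1/p) f(z)` has no eigenvalues on
`H^p(𝕌)`: if `f ∈ H^p(𝕌)` satisfies `−z f′(z) − (1/p) f(z) = γ f(z)` on `𝕌`, then `f ≡ 0`. -/
theorem generator_no_eigenvalues (p : ℝ) (hp : 1 ≤ p) (γ : ℂ) (f : ℂ → ℂ) (hf : MemHp p f)
    (heig : ∀ z : ℂ, 0 < z.im → -(z * deriv f z) - (1 / (p : ℂ)) * f z = γ * f z) :
    ∀ z : ℂ, 0 < z.im → f z = 0 := by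
  obtain ⟨hdiff, hfin⟩ := hf
  set U : Set ℂ := {z : ℂ | 0 < z.im} with hU
  have hUopen : IsOpen U := isOpen_lt continuous_const Complex.continuous_im
  have hp0 : (0:ℝ) < p := lt_of_lt_of_le one_pos hp
  set a : ℂ := γ + 1/(p:ℂ) with ha
  have hUne : ∀ z ∈ U, z ≠ 0 := by
    intro z hz h0
    rw [hU] at hz
    simp [h0] at hz
  -- Step 1: z ^ a * f z is constant on U
  have hderiv : ∀ z ∈ U, HasDerivAt (fun w => w ^ a * f w) 0 z := by
    intro z hz
    have hz0 := hUne z hz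
    have h1 : HasDerivAt (fun w : ℂ => w ^ a) (a * z ^ (a-1)) z :=
      (Complex.hasStrictDerivAt_cpow_const (Or.inr (ne_of_gt hz))).hasDerivAt
    have h2 : HasDerivAt f (deriv f z) z :=
      (hdiff.differentiableAt (hUopen.mem_nhds hz)).hasDerivAt
    have h3 := h1.mul h2
    refine h3.congr_deriv ?_
    have hzd : z * deriv f z = -a * f z := by
      rw [ha]; linear_combination -(heig z hz)
    have hza : z ^ a = z ^ (a-1) * z := by
      conv_lhs => rw [show a = (a-1) + 1 by ring, Complex.cpow_add _ _ hz0, Complex.cpow_one]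
    rw [hza]
    linear_combination (z ^ (a-1)) * hzd
  have hIU : Complex.I ∈ U := by simp [hU]
  set C : ℂ := Complex.I ^ a * f Complex.I with hC
  have hconst : ∀ z ∈ U, f z = C * (z ^ a)⁻¹ := by
    intro z hz
    have hdiffg : DifferentiableOn ℂ (fun w => w ^ a * f w) U :=
      fun w hw => ((hderiv w hw).differentiableAt).differentiableWithinAt
    have hzero : ∀ w ∈ U, fderivWithin ℂ (fun w => w ^ a * f w) U w = 0 := by
      intro w hw
      rw [fderivWithin_of_isOpen hUopen hw, (hderiv w hw).hasFDerivAt.fderiv]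
      ext t; simp
    have hg : z ^ a * f z = C :=
      (convex_halfSpace_im_gt 0).is_const_of_fderivWithin_eq_zero hdiffg hzero hz hIU
    have hzane : z ^ a ≠ 0 := by
      simp only [ne_eq, Complex.cpow_eq_zero_iff, not_and_or, not_not]
      exact Or.inl (hUne z hz)
    field_simp [hzane] at hg ⊢
    linear_combination hg
  -- It suffices to show C = 0
  suffices hC0 : C = 0 by
    intro z hz
    rw [hconst z hz, hC0, zero_mul]
  by_contra hC0
  -- pointwise lower bound
  set s : ℝ := p * a.re with hs
  set c₀ : ℝ := ‖C‖ ^ p * Real.exp (-(|a.im| * Real.pi * p)) with hc₀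
  have hc₀pos : 0 < c₀ := by
    apply mul_pos _ (Real.exp_pos _)
    exact Real.rpow_pos_of_pos (norm_pos_iff.mpr hC0) p
  have hpt : ∀ z ∈ U, c₀ * ‖z‖ ^ (-s) ≤ ‖f z‖ ^ p := by
    intro z hz
    have hz0 := hUne z hz
    have habs : ‖f z‖
        = ‖C‖ * Real.exp (Complex.arg z * a.im) * (‖z‖ ^ a.re)⁻¹ := by
      rw [hconst z hz, norm_mul, norm_inv, Complex.norm_cpow_of_ne_zero hz0]
      field_simp
    have hfp : ‖f z‖ ^ p
        = ‖C‖ ^ p * Real.exp (Complex.arg z * a.im * p) * ‖z‖ ^ (-s) := by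
      rw [habs, Real.mul_rpow (by positivity) (by positivity),
        Real.mul_rpow (by positivity) (Real.exp_nonneg _), ← Real.exp_mul,
        ← Real.rpow_neg (norm_nonneg z), ← Real.rpow_mul (norm_nonneg z),
        show -a.re * p = -s by rw [hs]; ring]
    rw [hfp, hc₀]
    have hexple : -(|a.im| * Real.pi * p) ≤ Complex.arg z * a.im * p := by
      have h1 : |Complex.arg z * a.im| ≤ Real.pi * |a.im| := by
        rw [abs_mul]
        exact mul_le_mul_of_nonneg_right (Complex.abs_arg_le_pi z) (abs_nonneg _)
      have h2 : -(Real.pi * |a.im|) ≤ Complex.arg z * a.im :=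
        le_trans (neg_le_neg h1) (neg_abs_le _)
      have h3 := mul_le_mul_of_nonneg_right h2 hp0.le
      linarith
    have := Real.exp_le_exp.mpr hexple
    have hXnn : (0:ℝ) ≤ ‖z‖ ^ (-s) := Real.rpow_nonneg (norm_nonneg z) _
    have hCnn : (0:ℝ) ≤ ‖C‖ ^ p := Real.rpow_nonneg (norm_nonneg C) _
    nlinarith [mul_le_mul_of_nonneg_left this hCnn,
      mul_le_mul_of_nonneg_right (mul_le_mul_of_nonneg_left this hCnn) hXnn]
  -- each height's integral is at most the Hardy norm
  have hL : ∀ y ∈ Set.Ioi (0:ℝ),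
      (∫⁻ x : ℝ, ENNReal.ofReal (‖f ((x : ℂ) + (y : ℂ) * Complex.I)‖ ^ p))
        ≤ hNormPow p f := by
    intro y hy
    rw [hNormPow]
    exact le_iSup₂ (f := fun (y : ℝ) (_ : y ∈ Set.Ioi (0:ℝ)) =>
      ∫⁻ x : ℝ, ENNReal.ofReal (‖f ((x : ℂ) + (y : ℂ) * Complex.I)‖ ^ p)) y hy
  have hmemU : ∀ (x y : ℝ), 0 < y → ((x : ℂ) + (y : ℂ) * Complex.I) ∈ U := by
    intro x y hy
    simp only [hU, Set.mem_setOf_eq, Complex.add_im, Complex.ofReal_im, Complex.mul_im,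
      Complex.ofReal_re, Complex.I_im, Complex.I_re, Complex.ofReal_im]
    simpa using hy
  rcases le_or_gt s 1 with hs1 | hs1
  · -- case s ≤ 1 : the integral at height 1 is divergent
    have h1U : ∀ x : ℝ, ((x:ℂ) + ((1:ℝ):ℂ) * Complex.I) ∈ U := fun x => hmemU x 1 one_pos
    set h : ℝ → ℝ := fun x => ‖f ((x : ℂ) + ((1:ℝ) : ℂ) * Complex.I)‖ ^ p with hh
    have hfinL : (∫⁻ x : ℝ, ENNReal.ofReal (h x)) < ⊤ :=
      lt_of_le_of_lt (hL 1 (by norm_num)) hfin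
    have hcont : Continuous h := by
      have hm : Continuous (fun x : ℝ => (x : ℂ) + ((1:ℝ) : ℂ) * Complex.I) :=
        Complex.continuous_ofReal.add continuous_const
      have hcf : Continuous (fun x : ℝ => f ((x : ℂ) + ((1:ℝ) : ℂ) * Complex.I)) :=
        (hdiff.continuousOn).comp_continuous hm (fun x => h1U x)
      exact (continuous_norm.comp hcf).rpow_const (fun x => Or.inr hp0.le)
    have hint : Integrable h := by
      refine ⟨hcont.aestronglyMeasurable, ?_⟩
      rw [hasFiniteIntegral_iff_ofReal
        (ae_of_all _ fun x => Real.rpow_nonneg (norm_nonneg _) p)]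
      exact hfinL
    set c₁ : ℝ := c₀ * 2 ^ (-|s|) with hc₁
    have hc₁pos : 0 < c₁ := mul_pos hc₀pos (Real.rpow_pos_of_pos two_pos _)
    have hbound : ∀ x : ℝ, x ∈ Set.Ioi (1:ℝ) → c₁ * x ^ (-s) ≤ h x := by
      intro x hx
      rw [Set.mem_Ioi] at hx
      have hx0 : (0:ℝ) < x := lt_trans one_pos hx
      have habsle : ‖(x:ℂ) + ((1:ℝ):ℂ) * Complex.I‖ ≤ 2 * x := by
        calc ‖(x:ℂ) + ((1:ℝ):ℂ) * Complex.I‖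
            ≤ ‖(x:ℂ)‖ + ‖((1:ℝ):ℂ) * Complex.I‖ := norm_add_le _ _
          _ = |x| + 1 := by simp
          _ ≤ 2 * x := by rw [abs_of_pos hx0]; linarith
      have habsge : x ≤ ‖(x:ℂ) + ((1:ℝ):ℂ) * Complex.I‖ := by
        have h1 := Complex.abs_re_le_norm ((x:ℂ) + ((1:ℝ):ℂ) * Complex.I)
        have h2 : ((x:ℂ) + ((1:ℝ):ℂ) * Complex.I).re = x := by simp
        rw [h2, abs_of_pos hx0] at h1
        exact h1
      have habspos : 0 < ‖(x:ℂ) + ((1:ℝ):ℂ) * Complex.I‖ :=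
        lt_of_lt_of_le hx0 habsge
      have key : 2 ^ (-|s|) * x ^ (-s) ≤ ‖(x:ℂ) + ((1:ℝ):ℂ) * Complex.I‖ ^ (-s) := by
        rcases le_or_gt 0 s with hsp | hsn
        · calc 2 ^ (-|s|) * x ^ (-s) = (2*x) ^ (-s) := by
                rw [Real.mul_rpow (by norm_num) hx0.le, _root_.abs_of_nonneg hsp]
          _ ≤ _ := Real.rpow_le_rpow_of_nonpos habspos habsle (by linarith)
        · calc 2 ^ (-|s|) * x ^ (-s) ≤ 1 * x ^ (-s) := by
                refine mul_le_mul_of_nonneg_right ?_ (Real.rpow_nonneg hx0.le _)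
                exact Real.rpow_le_one_of_one_le_of_nonpos one_le_two
                  (neg_nonpos.mpr (abs_nonneg s))
          _ = x ^ (-s) := one_mul _
          _ ≤ _ := Real.rpow_le_rpow hx0.le habsge (by linarith)
      calc c₁ * x ^ (-s) = c₀ * (2 ^ (-|s|) * x ^ (-s)) := by rw [hc₁]; ring
        _ ≤ c₀ * ‖(x:ℂ) + ((1:ℝ):ℂ) * Complex.I‖ ^ (-s) :=
            mul_le_mul_of_nonneg_left key hc₀pos.le
        _ ≤ h x := hpt _ (h1U x)
    have hphi : IntegrableOn (fun x : ℝ => c₁ * x ^ (-s)) (Set.Ioi 1) := by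
      refine Integrable.mono (hint.integrableOn) ?_ ?_
      · refine (ContinuousOn.aestronglyMeasurable ?_ measurableSet_Ioi)
        intro x hx
        have hx0 : x ≠ 0 := by
          rw [Set.mem_Ioi] at hx; positivity
        exact ((Real.continuousAt_rpow_const x (-s) (Or.inl hx0)).const_smul c₁ |>.continuousWithinAt)
      · rw [ae_restrict_iff' measurableSet_Ioi]
        refine ae_of_all _ fun x hx => ?_
        have hx0 : (0:ℝ) < x := lt_trans one_pos hx
        have hhx : 0 ≤ h x := Real.rpow_nonneg (norm_nonneg _) p
        rw [Real.norm_eq_abs, Real.norm_eq_abs, _root_.abs_of_nonneg (by positivity : (0:ℝ) ≤ c₁ * x ^ (-s)),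
          _root_.abs_of_nonneg hhx]
        exact hbound x hx
    have hxs : IntegrableOn (fun x : ℝ => x ^ (-s)) (Set.Ioi 1) := by
      have h2 := hphi.const_mul c₁⁻¹
      have h3 : (fun x : ℝ => c₁⁻¹ * (c₁ * x ^ (-s))) = fun x : ℝ => x ^ (-s) := by
        funext x
        rw [← mul_assoc, inv_mul_cancel₀ hc₁pos.ne', one_mul]
      rwa [h3] at h2
    rw [integrableOn_Ioi_rpow_iff zero_lt_one] at hxs
    linarith
  · -- case 1 < s : the integrals blow up as y → 0
    have hlow : ∀ y : ℝ, 0 < y → ENNReal.ofReal (c₀ * (2*y) ^ (1 - s)) ≤ hNormPow p f := by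
      intro y hy
      have h2y : (0:ℝ) < 2*y := by linarith
      have hpoint : ∀ x ∈ Set.Icc (-y) y,
          ENNReal.ofReal (c₀ * (2*y) ^ (-s))
            ≤ ENNReal.ofReal (‖f ((x : ℂ) + (y : ℂ) * Complex.I)‖ ^ p) := by
        intro x hx
        apply ENNReal.ofReal_le_ofReal
        have hmem := hmemU x y hy
        have habsle : ‖(x:ℂ) + (y:ℂ) * Complex.I‖ ≤ 2*y := by
          calc ‖(x:ℂ) + (y:ℂ) * Complex.I‖
              ≤ ‖(x:ℂ)‖ + ‖(y:ℂ) * Complex.I‖ := norm_add_le _ _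
            _ = |x| + |y| := by simp
            _ ≤ 2*y := by
                have := abs_le.mpr ⟨hx.1, hx.2⟩
                rw [abs_of_pos hy]
                linarith
        have habspos : 0 < ‖(x:ℂ) + (y:ℂ) * Complex.I‖ :=
          norm_pos_iff.mpr (hUne _ hmem)
        have key : (2*y:ℝ) ^ (-s) ≤ ‖(x:ℂ) + (y:ℂ) * Complex.I‖ ^ (-s) :=
          Real.rpow_le_rpow_of_nonpos habspos habsle (by linarith)
        calc c₀ * (2*y)^(-s) ≤ c₀ * ‖(x:ℂ) + (y:ℂ) * Complex.I‖ ^ (-s) :=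
              mul_le_mul_of_nonneg_left key hc₀pos.le
          _ ≤ _ := hpt _ hmem
      calc ENNReal.ofReal (c₀ * (2*y) ^ (1-s))
          = ENNReal.ofReal (c₀ * (2*y) ^ (-s)) * volume (Set.Icc (-y) y) := by
            rw [Real.volume_Icc, ← ENNReal.ofReal_mul (by positivity)]
            congr 1
            rw [show (1:ℝ)-s = -s + 1 by ring, Real.rpow_add h2y, Real.rpow_one]
            ring
        _ = ∫⁻ _ in Set.Icc (-y) y, ENNReal.ofReal (c₀ * (2*y) ^ (-s)) :=
            (setLIntegral_const _ _).symm
        _ ≤ ∫⁻ x in Set.Icc (-y) y,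
              ENNReal.ofReal (‖f ((x : ℂ) + (y : ℂ) * Complex.I)‖ ^ p) :=
            setLIntegral_mono_ae' measurableSet_Icc (ae_of_all _ hpoint)
        _ ≤ ∫⁻ x : ℝ, ENNReal.ofReal (‖f ((x : ℂ) + (y : ℂ) * Complex.I)‖ ^ p) :=
            setLIntegral_le_lintegral _ _
        _ ≤ hNormPow p f := hL y hy
    set c₂ : ℝ := c₀ * 2 ^ (1-s) with hc₂
    have hc₂pos : 0 < c₂ := mul_pos hc₀pos (Real.rpow_pos_of_pos two_pos _)
    have heq : ∀ n : ℕ, c₀ * (2 * ((n:ℝ)+1)⁻¹) ^ (1-s) = c₂ * ((n:ℝ)+1) ^ (s-1) := by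
      intro n
      have hn : (0:ℝ) < (n:ℝ)+1 := by positivity
      rw [Real.mul_rpow (by norm_num) (by positivity), Real.inv_rpow hn.le,
        ← Real.rpow_neg hn.le, hc₂, show -(1-s) = s - 1 by ring]
      ring
    have htend : Tendsto (fun n : ℕ => ENNReal.ofReal (c₂ * ((n:ℝ)+1) ^ (s-1))) atTop (𝓝 ⊤) := by
      apply ENNReal.tendsto_ofReal_atTop.comp
      apply Tendsto.const_mul_atTop hc₂pos
      exact (tendsto_rpow_atTop (by linarith)).comp
        (tendsto_atTop_add_const_right _ 1 tendsto_natCast_atTop_atTop)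
    have htop : (⊤ : ENNReal) ≤ hNormPow p f :=
      le_of_tendsto' htend (fun n => by
        rw [← heq n]; exact hlow _ (by positivity))
    exact hfin.ne' (top_le_iff.mp htop).symm
end

section
/- Let 1 ≤ p < ∞, let μ ∈ ℂ be purely imaginary (Re(μ) = 0), and set λ = μ + 1/p. The function f_λ(z) = iλ(i+z)^{-λ-1} belongs to H^p(𝕌) (powers via the principal branch), but there exists no g ∈ H^p(𝕌) satisfying λ g(z) + z g′(z) = iλ(i+z)^{-λ-1} for all z ∈ 𝕌. (Hence every purely imaginary μ lies in the spectrum of the generator Γ(f)(z) = −z f′(z) − (1/p) f(z), so σ(Γ) = iℝ.) -/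
open Complex MeasureTheory Filter Topology Bornology

lemma abs_cpow_lower {w c : ℂ} (hw : w ≠ 0) :
    ‖w‖ ^ c.re / Real.exp (Real.pi * |c.im|) ≤ ‖w ^ c‖ := by
  rw [Complex.norm_cpow_of_ne_zero hw]
  apply div_le_div_of_nonneg_left (Real.rpow_nonneg (norm_nonneg w) _) (Real.exp_pos _)
  apply Real.exp_le_exp.2
  calc w.arg * c.im ≤ |w.arg * c.im| := le_abs_self _
    _ = |w.arg| * |c.im| := abs_mul _ _
    _ ≤ Real.pi * |c.im| := by
        exact mul_le_mul_of_nonneg_right (Complex.abs_arg_le_pi w) (abs_nonneg _)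

lemma abs_cpow_upper {w c : ℂ} (hw : w ≠ 0) :
    ‖w ^ c‖ ≤ ‖w‖ ^ c.re * Real.exp (Real.pi * |c.im|) := by
  rw [Complex.norm_cpow_of_ne_zero hw, div_le_iff₀ (Real.exp_pos _), mul_assoc, ← Real.exp_add]
  have h1 : (0:ℝ) ≤ Real.pi * |c.im| + w.arg * c.im := by
    have : |w.arg * c.im| ≤ Real.pi * |c.im| := by
      rw [abs_mul]
      exact mul_le_mul_of_nonneg_right (Complex.abs_arg_le_pi w) (abs_nonneg _)
    linarith [neg_abs_le (w.arg * c.im)]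
  calc ‖w‖ ^ c.re = ‖w‖ ^ c.re * 1 := (mul_one _).symm
    _ ≤ _ := by
        apply mul_le_mul_of_nonneg_left _ (Real.rpow_nonneg (norm_nonneg w) _)
        rw [← Real.exp_zero]
        exact Real.exp_le_exp.2 h1

lemma lintegral_log_lower {c a b : ℝ} (hc : 0 < c) (ha : 0 < a) (hab : a ≤ b)
    (F : ℝ → ENNReal) (hF : ∀ x ∈ Set.Ioc a b, ENNReal.ofReal (c / x) ≤ F x) :
    ENNReal.ofReal (c * Real.log (b / a)) ≤ ∫⁻ x : ℝ, F x := by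
  have hint : IntegrableOn (fun x : ℝ => c / x) (Set.Ioc a b) := by
    apply (ContinuousOn.integrableOn_compact isCompact_Icc ?_).mono_set Set.Ioc_subset_Icc_self
    apply ContinuousOn.div continuousOn_const continuousOn_id
    intro x hx; exact ne_of_gt (lt_of_lt_of_le ha hx.1)
  have hnn : 0 ≤ᵐ[volume.restrict (Set.Ioc a b)] fun x : ℝ => c / x := by
    filter_upwards [ae_restrict_mem measurableSet_Ioc] with x hx
    exact div_nonneg hc.le (le_of_lt (lt_of_lt_of_le ha hx.1.le))
  calc ENNReal.ofReal (c * Real.log (b / a))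
      = ∫⁻ x in Set.Ioc a b, ENNReal.ofReal (c / x) := by
        rw [← MeasureTheory.ofReal_integral_eq_lintegral_ofReal hint hnn]
        congr 1
        rw [← intervalIntegral.integral_of_le hab]
        simp_rw [div_eq_mul_inv c]
        rw [intervalIntegral.integral_const_mul, integral_inv_of_pos ha (lt_of_lt_of_le ha hab)]
    _ ≤ ∫⁻ x in Set.Ioc a b, F x := lintegral_mono_ae (by
        filter_upwards [ae_restrict_mem measurableSet_Ioc] with x hx using hF x hx)
    _ ≤ ∫⁻ x : ℝ, F x := setLIntegral_le_lintegral _ _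

lemma exists_K (S : ENNReal) (hS : S ≠ ⊤) {c : ℝ} (hc : 0 < c) :
    ∃ K : ℝ, 1 ≤ K ∧ S < ENNReal.ofReal (c * Real.log K) := by
  refine ⟨Real.exp ((S.toReal + 1) / c), ?_, ?_⟩
  · rw [← Real.exp_zero]
    apply Real.exp_le_exp.2
    positivity
  · rw [Real.log_exp, mul_div_cancel₀ _ hc.ne']
    conv_lhs => rw [← ENNReal.ofReal_toReal hS]
    rw [ENNReal.ofReal_lt_ofReal_iff (by positivity)]
    linarith

lemma memHp_f (p : ℝ) (hp : 1 ≤ p) (l : ℂ) (hlre : l.re = p⁻¹) :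
    MemHp p (fun z => Complex.I * l * (Complex.I + z) ^ (-l - 1)) := by
  have hp0 : (0:ℝ) < p := lt_of_lt_of_le one_pos hp
  set M : ℝ := Real.exp (Real.pi * |l.im|) with hM
  have hM1 : 1 ≤ M := Real.one_le_exp (by positivity)
  constructor
  · intro z hz
    have hne : Complex.I + z ∈ Complex.slitPlane := by
      right
      simp only [Complex.add_im, Complex.I_im]
      simp only [Set.mem_setOf_eq] at hz
      linarith
    have : HasDerivAt (fun z : ℂ => Complex.I * l * (Complex.I + z) ^ (-l - 1))
        (Complex.I * l * ((-l-1) * (Complex.I + z) ^ (-l - 1 - 1) * 1)) z := by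
      exact (((hasDerivAt_id z).const_add Complex.I).cpow_const hne).const_mul _
    exact this.differentiableAt.differentiableWithinAt
  · have key : ∀ y ∈ Set.Ioi (0:ℝ),
        (∫⁻ x : ℝ, ENNReal.ofReal (‖(fun z => Complex.I * l * (Complex.I + z) ^ (-l - 1)) ((x : ℂ) + (y : ℂ) * Complex.I)‖ ^ p))
        ≤ ∫⁻ x : ℝ, ENNReal.ofReal ((‖l‖ * M) ^ p * (1 + x ^ 2)⁻¹) := by
      intro y hy
      have hy0 : (0:ℝ) < y := hy
      apply lintegral_mono
      intro x
      apply ENNReal.ofReal_le_ofReal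
      set w : ℂ := Complex.I + ((x : ℂ) + (y : ℂ) * Complex.I) with hw
      have hwim : w.im = 1 + y := by simp [hw]
      have hwre : w.re = x := by simp [hw]
      have hw0 : w ≠ 0 := by
        intro h; rw [h] at hwim; simp at hwim; linarith
      have habs2 : 1 + x ^ 2 ≤ ‖w‖ ^ (2:ℕ) := by
        rw [Complex.sq_norm, Complex.normSq_apply, hwre, hwim]
        nlinarith
      have habs1 : Real.sqrt (1 + x ^ 2) ≤ ‖w‖ := by
        rw [show ‖w‖ = Real.sqrt (‖w‖ ^ (2:ℕ)) by
          rw [Real.sqrt_sq (norm_nonneg w)]]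
        exact Real.sqrt_le_sqrt habs2
      have hs1 : (1:ℝ) ≤ Real.sqrt (1 + x ^ 2) := by
        nlinarith [Real.sq_sqrt (show (0:ℝ) ≤ 1+x^2 by positivity), Real.sqrt_nonneg (1+x^2)]
      have hsq0 : (0:ℝ) < Real.sqrt (1 + x ^ 2) := lt_of_lt_of_le one_pos hs1
      -- bound on abs f
      have h1 : ‖Complex.I * l * w ^ (-l - 1)‖
          ≤ (‖l‖ * M) * ‖w‖ ^ (-(p⁻¹) - 1) := by
        rw [norm_mul, norm_mul, Complex.norm_I, one_mul]
        have := abs_cpow_upper (w := w) (c := -l-1) hw0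
        have hre : (-l-1).re = -(p⁻¹) - 1 := by simp [hlre]
        have him : |(-l-1).im| = |l.im| := by simp
        rw [hre, him] at this
        calc ‖l‖ * ‖w ^ (-l-1)‖
            ≤ ‖l‖ * (‖w‖ ^ (-(p⁻¹) - 1) * M) :=
              mul_le_mul_of_nonneg_left this (norm_nonneg l)
          _ = (‖l‖ * M) * ‖w‖ ^ (-(p⁻¹) - 1) := by ring
      -- raise to p
      have h2 : ‖Complex.I * l * w ^ (-l - 1)‖ ^ p
          ≤ ((‖l‖ * M) * ‖w‖ ^ (-(p⁻¹) - 1)) ^ p :=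
        Real.rpow_le_rpow (norm_nonneg _) h1 hp0.le
      refine h2.trans ?_
      rw [Real.mul_rpow (by positivity) (Real.rpow_nonneg (norm_nonneg w) _)]
      apply mul_le_mul_of_nonneg_left _ (by positivity)
      rw [← Real.rpow_natCast (‖w‖) 2] at habs2
      rw [← Real.rpow_mul (norm_nonneg w)]
      have hexp : (-(p⁻¹) - 1) * p = -(1 + p) := by field_simp; ring
      rw [hexp]
      calc ‖w‖ ^ (-(1+p))
          ≤ Real.sqrt (1 + x^2) ^ (-(1+p)) :=
            Real.rpow_le_rpow_of_nonpos hsq0 habs1 (by linarith)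
        _ ≤ Real.sqrt (1 + x^2) ^ (-(2:ℝ)) :=
            Real.rpow_le_rpow_of_exponent_le hs1 (by linarith)
        _ = (1 + x^2)⁻¹ := by
            rw [Real.rpow_neg (Real.sqrt_nonneg _), show ((2:ℝ)) = ((2:ℕ):ℝ) by norm_num,
              Real.rpow_natCast, Real.sq_sqrt (by positivity)]
    have hfin : (∫⁻ x : ℝ, ENNReal.ofReal ((‖l‖ * M) ^ p * (1 + x ^ 2)⁻¹)) < ⊤ := by
      apply Integrable.lintegral_lt_top
      exact integrable_inv_one_add_sq.const_mul _
    unfold hNormPow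
    exact lt_of_le_of_lt (iSup₂_le key) hfin

lemma g_formula (l : ℂ) (g : ℂ → ℂ)
    (hg : DifferentiableOn ℂ g {z : ℂ | 0 < z.im})
    (hode : ∀ z : ℂ, 0 < z.im →
      l * g z + z * deriv g z = Complex.I * l * (Complex.I + z) ^ (-l - 1)) :
    ∃ C : ℂ, ∀ z : ℂ, 0 < z.im → g z = (Complex.I + z) ^ (-l) + C * z ^ (-l) := by
  set U : Set ℂ := {z : ℂ | 0 < z.im} with hU
  have hUopen : IsOpen U := by
    exact isOpen_lt continuous_const Complex.continuous_im
  have hUconv : Convex ℝ U := convex_halfSpace_im_gt 0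
  set h : ℂ → ℂ := fun z => z ^ l * (g z - (Complex.I + z) ^ (-l)) with hh
  -- slitPlane facts
  have hsl : ∀ z ∈ U, z ∈ Complex.slitPlane := fun z hz => Or.inr (ne_of_gt hz)
  have hsl' : ∀ z ∈ U, Complex.I + z ∈ Complex.slitPlane := by
    intro z hz
    right
    simp only [Complex.add_im, Complex.I_im]
    have : (0:ℝ) < z.im := hz
    linarith
  have hz0 : ∀ z ∈ U, z ≠ 0 := fun z hz h0 => by
    have : (0:ℝ) < z.im := hz; rw [h0] at this; simp at this
  have hw0 : ∀ z ∈ U, Complex.I + z ≠ 0 := fun z hz h0 => by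
    have := hsl' z hz
    rw [h0] at this
    simpa using this
  -- h has zero derivative on U
  have hderiv : ∀ z ∈ U, HasDerivAt h 0 z := by
    intro z hz
    have hgz : HasDerivAt g (deriv g z) z :=
      (hg.differentiableAt (hUopen.mem_nhds hz)).hasDerivAt
    have h1 : HasDerivAt (fun z : ℂ => z ^ l) (l * z ^ (l - 1)) z :=
      (Complex.hasStrictDerivAt_cpow_const (hsl z hz)).hasDerivAt
    have h2 : HasDerivAt (fun z : ℂ => (Complex.I + z) ^ (-l))
        ((-l) * (Complex.I + z) ^ (-l - 1) * 1) z :=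
      ((hasDerivAt_id z).const_add Complex.I).cpow_const (hsl' z hz)
    have H := h1.mul (hgz.sub h2)
    have key : l * z ^ (l - 1) * (g z - (Complex.I + z) ^ (-l)) +
        z ^ l * (deriv g z - (-l) * (Complex.I + z) ^ (-l - 1) * 1) = 0 := by
      have e1 : z ^ l = z ^ (l - 1) * z := by
        conv_lhs => rw [show l = (l - 1) + 1 by ring]
        rw [Complex.cpow_add _ _ (hz0 z hz), Complex.cpow_one]
      have e2 : (Complex.I + z) ^ (-l) =
          (Complex.I + z) ^ (-l - 1) * (Complex.I + z) := by
        conv_lhs => rw [show -l = (-l - 1) + 1 by ring]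
        rw [Complex.cpow_add _ _ (hw0 z hz), Complex.cpow_one]
      rw [e1, e2]
      linear_combination z ^ (l - 1) * hode z hz
    simp only [Pi.sub_apply] at H
    rw [key] at H
    exact H
  -- h is constant on U
  have hdiff : DifferentiableOn ℂ h U :=
    fun z hz => ((hderiv z hz).differentiableAt).differentiableWithinAt
  have hconst : ∀ z ∈ U, h z = h Complex.I := by
    intro z hz
    have hI : Complex.I ∈ U := by simp [hU]
    apply hUconv.is_const_of_fderivWithin_eq_zero hdiff
    · intro x hx
      have h00 : (ContinuousLinearMap.toSpanSingleton ℂ (0:ℂ)) = 0 := by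
        ext; simp
      have hf : HasFDerivAt h (0 : ℂ →L[ℂ] ℂ) x := by
        have := (hderiv x hx).hasFDerivAt
        rwa [h00] at this
      exact hf.hasFDerivWithinAt.fderivWithin (hUopen.uniqueDiffOn x hx)
    · exact hz
    · exact hI
  refine ⟨h Complex.I, fun z hz => ?_⟩
  have hc := hconst z hz
  have hzl : z ^ l ≠ 0 := by
    intro h0
    rcases (Complex.cpow_eq_zero_iff _ _).1 h0 with ⟨h0, -⟩
    exact hz0 z hz h0
  have hninv : z ^ (-l) = (z ^ l)⁻¹ := Complex.cpow_neg z l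
  rw [hh] at hc
  simp only at hc
  rw [hninv]
  field_simp at hc ⊢
  ring_nf at hc ⊢
  simp only [hh]
  rw [show Complex.I + Complex.I = Complex.I * 2 by ring]
  linear_combination hc

lemma sol_not_finite (p : ℝ) (hp : 1 ≤ p) (l : ℂ) (hlre : l.re = p⁻¹) (C : ℂ) (g : ℂ → ℂ)
    (hform : ∀ z : ℂ, 0 < z.im →
      g z = (Complex.I + z) ^ (-l) + C * z ^ (-l)) :
    ¬ hNormPow p g < ⊤ := by
  intro hfin
  have hp0 : (0:ℝ) < p := lt_of_lt_of_le one_pos hp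
  set M : ℝ := Real.exp (Real.pi * |l.im|) with hM
  have hM1 : 1 ≤ M := Real.one_le_exp (by positivity)
  have hM0 : 0 < M := lt_of_lt_of_le one_pos hM1
  have hre : (-l).re = -(p⁻¹) := by simp [hlre]
  have him : |(-l).im| = |l.im| := by simp
  have hS : hNormPow p g ≠ ⊤ := ne_of_lt hfin
  -- rpow helper
  have pow_p : ∀ a : ℝ, 0 < a → (a ^ (-(p⁻¹))) ^ p = a⁻¹ := by
    intro a ha
    rw [← Real.rpow_mul ha.le, show -p⁻¹ * p = -1 by field_simp, Real.rpow_neg_one]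
  -- integral lower bound: given y > 0, R ≥ y, and a pointwise bound
  by_cases hC : C = 0
  · -- divergence at infinity, y = 1
    obtain ⟨K, hK1, hKS⟩ := exists_K (hNormPow p g) hS
      (show (0:ℝ) < (2 * M ^ p)⁻¹ by positivity)
    set b : ℝ := 2 * K with hb
    have hblow : ENNReal.ofReal ((2 * M ^ p)⁻¹ * Real.log (b / 2)) ≤
        ∫⁻ x : ℝ, ENNReal.ofReal (‖g ((x : ℂ) + ((1:ℝ) : ℂ) * Complex.I)‖ ^ p) := by
      apply lintegral_log_lower (by positivity) (by norm_num : (0:ℝ) < 2) (by nlinarith)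
      intro x hx
      have hx2 : (2:ℝ) < x := hx.1
      apply ENNReal.ofReal_le_ofReal
      set z : ℂ := (x : ℂ) + ((1:ℝ) : ℂ) * Complex.I with hz
      set w : ℂ := Complex.I + z with hw
      have hwe : w = (x : ℂ) + 2 * Complex.I := by rw [hw, hz]; push_cast; ring
      have hw0 : w ≠ 0 := by
        intro h0
        have : w.im = 2 := by rw [hwe]; simp
        rw [h0] at this; simp at this
      have habsw : ‖w‖ ≤ 2 * x := by
        rw [hwe]
        calc ‖(x:ℂ) + 2 * Complex.I‖ ≤
            ‖(x:ℂ)‖ + ‖2 * Complex.I‖ := norm_add_le _ _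
          _ = |x| + 2 := by simp
          _ ≤ 2 * x := by rw [abs_of_pos (by linarith)]; linarith
      have habsw0 : 0 < ‖w‖ := norm_pos_iff.mpr hw0
      have hgz : g z = w ^ (-l) := by
        rw [hform z (by rw [hz]; simp), hC]; ring
      rw [hgz]
      have h1 : (2*x) ^ (-(p⁻¹)) / M ≤ ‖w ^ (-l)‖ := by
        refine le_trans ?_ (by simpa [hre, him] using abs_cpow_lower (c := -l) hw0)
        apply div_le_div_of_nonneg_right ?_ hM0.le
        exact Real.rpow_le_rpow_of_nonpos habsw0 habsw (neg_nonpos.mpr (by positivity))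
      calc (2 * M ^ p)⁻¹ / x = ((2*x) ^ (-(p⁻¹)) / M) ^ p := by
            rw [Real.div_rpow (by positivity) hM0.le, pow_p (2*x) (by linarith)]
            rw [mul_inv, mul_inv]
            have hMp : (0:ℝ) < M ^ p := Real.rpow_pos_of_pos hM0 p
            field_simp
        _ ≤ ‖w ^ (-l)‖ ^ p :=
            Real.rpow_le_rpow (by positivity) h1 hp0.le
    have hle : (∫⁻ x : ℝ, ENNReal.ofReal (‖g ((x : ℂ) + ((1:ℝ) : ℂ) * Complex.I)‖ ^ p))
        ≤ hNormPow p g :=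
      le_iSup₂ (f := fun (y : ℝ) (_ : y ∈ Set.Ioi (0:ℝ)) =>
        ∫⁻ x : ℝ, ENNReal.ofReal (‖g ((x : ℂ) + (y : ℂ) * Complex.I)‖ ^ p)) 1 (by simp)
    have : hNormPow p g < hNormPow p g := by
      calc hNormPow p g < ENNReal.ofReal ((2 * M ^ p)⁻¹ * Real.log K) := hKS
        _ = ENNReal.ofReal ((2 * M ^ p)⁻¹ * Real.log (b / 2)) := by
            rw [hb]; congr 2; rw [mul_comm, mul_div_assoc]; norm_num
        _ ≤ _ := le_trans hblow hle
    exact lt_irrefl _ this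
  · -- divergence near 0 as y → 0
    have hC0 : 0 < ‖C‖ := norm_pos_iff.mpr hC
    set c₁ : ℝ := ‖C‖ / (2*M) with hc₁
    have hc₁0 : 0 < c₁ := by positivity
    set r : ℝ := min 1 ((c₁/M) ^ p) with hr
    have hr0 : 0 < r := lt_min one_pos (Real.rpow_pos_of_pos (by positivity) p)
    set R : ℝ := r/2 with hR
    have hR0 : 0 < R := by positivity
    set c : ℝ := c₁ ^ p / 2 with hc
    have hc0 : 0 < c := by
      have := Real.rpow_pos_of_pos hc₁0 p
      positivity
    obtain ⟨K, hK1, hKS⟩ := exists_K (hNormPow p g) hS hc0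
    have hK0 : (0:ℝ) < K := lt_of_lt_of_le one_pos hK1
    set y : ℝ := R / K with hy
    have hy0 : 0 < y := div_pos hR0 hK0
    have hyR : y ≤ R := by rw [hy]; exact div_le_self hR0.le hK1
    have hblow : ENNReal.ofReal (c * Real.log (R / y)) ≤
        ∫⁻ x : ℝ, ENNReal.ofReal (‖g ((x : ℂ) + (y : ℂ) * Complex.I)‖ ^ p) := by
      apply lintegral_log_lower hc0 hy0 hyR
      intro x hx
      apply ENNReal.ofReal_le_ofReal
      set z : ℂ := (x : ℂ) + (y : ℂ) * Complex.I with hz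
      have hx0 : 0 < x := lt_trans hy0 hx.1
      have hzim : z.im = y := by rw [hz]; simp
      have hz0 : z ≠ 0 := by
        intro h0; rw [h0] at hzim; simp at hzim; exact absurd hzim.symm (ne_of_gt hy0)
      have habsz0 : 0 < ‖z‖ := norm_pos_iff.mpr hz0
      have habsz_le : ‖z‖ ≤ 2*x := by
        calc ‖z‖ ≤ ‖(x:ℂ)‖ + ‖(y:ℂ) * Complex.I‖ :=
              norm_add_le _ _
          _ = |x| + |y| := by simp
          _ ≤ 2*x := by
              rw [abs_of_pos hx0, abs_of_pos hy0]; linarith [hx.1]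
      have habsz_r : ‖z‖ ≤ r := by
        calc ‖z‖ ≤ ‖(x:ℂ)‖ + ‖(y:ℂ) * Complex.I‖ :=
              norm_add_le _ _
          _ = |x| + |y| := by simp
          _ ≤ r := by
              rw [abs_of_pos hx0, abs_of_pos hy0]
              have h1 : x ≤ R := hx.2
              have h2 : R + R = r := by rw [hR]; ring
              linarith [hyR]
      -- abs z ^ (-p⁻¹) is large
      have hzp : M / c₁ ≤ ‖z‖ ^ (-(p⁻¹)) := by
        have h1 : ‖z‖ ≤ (c₁/M) ^ p := le_trans habsz_r (min_le_right _ _)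
        have h2 := Real.rpow_le_rpow_of_nonpos (z := -(p⁻¹)) habsz0 h1
          (neg_nonpos.mpr (by positivity))
        calc M / c₁ = ((c₁/M) ^ p) ^ (-(p⁻¹)) := by
              rw [← Real.rpow_mul (by positivity : (0:ℝ) ≤ c₁/M),
                show p * -(p⁻¹) = -1 by field_simp, Real.rpow_neg_one, inv_div]
          _ ≤ _ := h2
      set w : ℂ := Complex.I + z with hw
      have hwim : w.im = 1 + y := by rw [hw]; simp [hzim]
      have hw0 : w ≠ 0 := by
        intro h0; rw [h0] at hwim; simp at hwim; linarith
      have hw1 : 1 ≤ ‖w‖ := by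
        calc (1:ℝ) ≤ |w.im| := by rw [hwim, abs_of_pos (by linarith)]; linarith
          _ ≤ ‖w‖ := Complex.abs_im_le_norm w
      have hwb : ‖w ^ (-l)‖ ≤ M := by
        refine le_trans (by simpa [hre, him] using abs_cpow_upper (c := -l) hw0) ?_
        have h1 : ‖w‖ ^ (-(p⁻¹)) ≤ 1 :=
          Real.rpow_le_one_of_one_le_of_nonpos hw1 (neg_nonpos.mpr (by positivity))
        calc ‖w‖ ^ (-(p⁻¹)) * M ≤ 1 * M :=
              mul_le_mul_of_nonneg_right h1 hM0.le
          _ = M := one_mul M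
      have hzlow : ‖C‖ * (‖z‖ ^ (-(p⁻¹)) / M) ≤
          ‖C * z ^ (-l)‖ := by
        rw [norm_mul]
        apply mul_le_mul_of_nonneg_left ?_ (norm_nonneg C)
        simpa [hre, him] using abs_cpow_lower (c := -l) hz0
      have hgz : g z = w ^ (-l) + C * z ^ (-l) := hform z (by rw [hzim]; exact hy0)
      have htri : ‖C * z ^ (-l)‖ - ‖w ^ (-l)‖ ≤
          ‖g z‖ := by
        rw [hgz, add_comm (w ^ (-l)) (C * z ^ (-l))]
        have h3 := norm_add_le (C * z ^ (-l) + w ^ (-l)) (-(w ^ (-l)))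
        rw [add_neg_cancel_right, norm_neg] at h3
        linarith
      set t : ℝ := ‖z‖ ^ (-(p⁻¹)) with ht
      have ht0 : 0 < t := Real.rpow_pos_of_pos habsz0 _
      have hlow : c₁ * t ≤ ‖g z‖ := by
        have h4 : M ≤ c₁ * t := by
          rw [div_le_iff₀ hc₁0] at hzp; linarith [hzp]
        have h5 : ‖C‖ * (t / M) = 2 * c₁ * t := by
          rw [hc₁]; field_simp
        have h7 : 2 * c₁ * t ≤ ‖C * z ^ (-l)‖ := by rw [← h5]; exact hzlow
        calc c₁ * t = 2 * c₁ * t - c₁ * t := by ring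
          _ ≤ ‖C * z ^ (-l)‖ - ‖w ^ (-l)‖ := by
              linarith [hwb, h4, h7]
          _ ≤ ‖g z‖ := htri
      -- raise to p
      have h8 : (c₁ * t) ^ p ≤ ‖g z‖ ^ p :=
        Real.rpow_le_rpow (by positivity) hlow hp0.le
      have h9 : (c₁ * t) ^ p = c₁ ^ p * (‖z‖)⁻¹ := by
        rw [Real.mul_rpow hc₁0.le ht0.le, ht, pow_p _ habsz0]
      have h10 : c₁ ^ p * (2*x)⁻¹ ≤ c₁ ^ p * (‖z‖)⁻¹ := by
        apply mul_le_mul_of_nonneg_left _ (Real.rpow_pos_of_pos hc₁0 p).le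
        exact inv_anti₀ habsz0 habsz_le
      have h11 : c / x = c₁ ^ p * (2*x)⁻¹ := by
        rw [hc]; field_simp
      calc c / x = c₁ ^ p * (2*x)⁻¹ := h11
        _ ≤ c₁ ^ p * (‖z‖)⁻¹ := h10
        _ = (c₁ * t) ^ p := h9.symm
        _ ≤ ‖g z‖ ^ p := h8
    have hle : (∫⁻ x : ℝ, ENNReal.ofReal (‖g ((x : ℂ) + (y : ℂ) * Complex.I)‖ ^ p))
        ≤ hNormPow p g :=
      le_iSup₂ (f := fun (y : ℝ) (_ : y ∈ Set.Ioi (0:ℝ)) =>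
        ∫⁻ x : ℝ, ENNReal.ofReal (‖g ((x : ℂ) + (y : ℂ) * Complex.I)‖ ^ p)) y hy0
    have hlog : Real.log (R / y) = Real.log K := by
      congr 1
      rw [hy]
      field_simp
    have : hNormPow p g < hNormPow p g := by
      calc hNormPow p g < ENNReal.ofReal (c * Real.log K) := hKS
        _ = ENNReal.ofReal (c * Real.log (R / y)) := by rw [hlog]
        _ ≤ _ := le_trans hblow hle
    exact lt_irrefl _ this

/-- for purely imaginary `μ` and `λ = μ + 1/p`, the function
`f_λ(z) = iλ(i+z)^{−λ−1}` is in `H^p(𝕌)`, but no `g ∈ H^p(𝕌)` satisfies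
`λ g(z) + z g′(z) = iλ(i+z)^{−λ−1}` on `𝕌`; hence `σ(Γ) = iℝ`. -/
theorem imaginary_axis_in_spectrum (p : ℝ) (hp : 1 ≤ p) (μ : ℂ) (hμ : μ.re = 0)
    (l : ℂ) (hl : l = μ + 1 / (p : ℂ)) :
    MemHp p (fun z => Complex.I * l * (Complex.I + z) ^ (-l - 1)) ∧
      ¬ ∃ g : ℂ → ℂ, MemHp p g ∧
        ∀ z : ℂ, 0 < z.im →
          l * g z + z * deriv g z = Complex.I * l * (Complex.I + z) ^ (-l - 1) := by
  have hp0 : (0:ℝ) < p := lt_of_lt_of_le one_pos hp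
  have hlre : l.re = p⁻¹ := by
    have h1 : (1 / (p:ℂ)) = ((p⁻¹ : ℝ) : ℂ) := by push_cast; ring
    rw [hl, Complex.add_re, hμ, h1, Complex.ofReal_re, zero_add]
  refine ⟨memHp_f p hp l hlre, ?_⟩
  rintro ⟨g, ⟨hgdiff, hgfin⟩, hode⟩
  obtain ⟨C, hform⟩ := g_formula l g hgdiff hode
  exact sol_not_finite p hp l hlre C g hform hgfin
end

section
/- Let 1 < p < ∞ and let w ∈ ℂ with w ≠ 0 and |w − p/(2(p−1))| = p/(2(p−1)). Then there exists h ∈ H^p(𝕌) such that no g ∈ H^p(𝕌) satisfies w g(z) − 𝒞(g)(z) = h(z) for all z ∈ 𝕌. (This is the nontrivial half of the statement that the spectrum of 𝒞 on H^p(𝕌) is the circle {w : |w − p/(2(p−1))| = p/(2(p−1))}.) -/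
open Complex MeasureTheory Filter Topology Bornology

/-- Integral of `f` along the straight segment from `0` to `z`, as an improper integral
at the endpoint `0` (parametrized over `(0,1]`). -/
noncomputable def segInt0 (f : ℂ → ℂ) (z : ℂ) : ℂ :=
  z * ∫ t in Set.Ioc (0:ℝ) 1, f ((t : ℂ) * z)

/-- The Cesàro operator `𝒞(f)(z) = (1/z) ∫_{[0,z]} f(ζ) dζ`. -/
noncomputable def cesaro (f : ℂ → ℂ) (z : ℂ) : ℂ := z⁻¹ * segInt0 f z

namespace CesaroAux

open Set
open scoped ENNReal NNReal

noncomputable section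

def U : Set ℂ := {z : ℂ | 0 < z.im}

lemma isOpen_U : IsOpen U := isOpen_lt continuous_const Complex.continuous_im

lemma convex_U : Convex ℝ U := convex_halfSpace_im_gt 0

lemma mem_U_iff {z : ℂ} : z ∈ U ↔ 0 < z.im := Iff.rfl

lemma ne_zero_of_mem_U {z : ℂ} (hz : z ∈ U) : z ≠ 0 := by
  intro h; rw [h] at hz; exact lt_irrefl (0:ℝ) (by simpa using mem_U_iff.mp hz)

lemma mem_slit_of_mem_U {z : ℂ} (hz : z ∈ U) : z ∈ Complex.slitPlane :=
  Or.inr (ne_of_gt hz)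

lemma add_I_mem_U {z : ℂ} (hz : z ∈ U) : z + Complex.I ∈ U := by
  simp only [mem_U_iff, Complex.add_im, Complex.I_im] at hz ⊢; linarith [hz]

lemma smul_mem_U {t : ℝ} (ht : 0 < t) {z : ℂ} (hz : z ∈ U) : (t : ℂ) * z ∈ U := by
  simp only [mem_U_iff, Complex.mul_im, Complex.ofReal_re, Complex.ofReal_im] at hz ⊢
  nlinarith

lemma abs_cpow_upper {z : ℂ} (hz : z ≠ 0) (c : ℂ) :
    ‖z ^ c‖ ≤ Real.exp (Real.pi * |c.im|) * ‖z‖ ^ c.re := by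
  rw [Complex.norm_cpow_of_ne_zero hz, div_eq_mul_inv, ← Real.exp_neg,
    mul_comm (‖z‖ ^ c.re)]
  refine mul_le_mul_of_nonneg_right (Real.exp_le_exp.2 ?_) (Real.rpow_nonneg (norm_nonneg _) _)
  calc -(z.arg * c.im) ≤ |z.arg * c.im| := neg_le_abs _
    _ = |z.arg| * |c.im| := abs_mul _ _
    _ ≤ Real.pi * |c.im| := mul_le_mul_of_nonneg_right (Complex.abs_arg_le_pi z) (abs_nonneg _)

lemma abs_cpow_lower {z : ℂ} (hz : z ≠ 0) (c : ℂ) :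
    Real.exp (-(Real.pi * |c.im|)) * ‖z‖ ^ c.re ≤ ‖z ^ c‖ := by
  rw [Complex.norm_cpow_of_ne_zero hz, div_eq_mul_inv, ← Real.exp_neg,
    mul_comm (‖z‖ ^ c.re)]
  refine mul_le_mul_of_nonneg_right (Real.exp_le_exp.2 (neg_le_neg ?_)) (Real.rpow_nonneg (norm_nonneg _) _)
  calc z.arg * c.im ≤ |z.arg * c.im| := le_abs_self _
    _ = |z.arg| * |c.im| := abs_mul _ _
    _ ≤ Real.pi * |c.im| := mul_le_mul_of_nonneg_right (Complex.abs_arg_le_pi z) (abs_nonneg _)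

lemma cpow_ne_zero_of_ne_zero {z : ℂ} (hz : z ≠ 0) (c : ℂ) : z ^ c ≠ 0 := by
  simp [Complex.cpow_eq_zero_iff, hz]

lemma abs_le_abs_add_I {z : ℂ} (hz : 0 < z.im) : ‖z‖ ≤ ‖z + Complex.I‖ := by
  rw [Complex.norm_def, Complex.norm_def]
  apply Real.sqrt_le_sqrt
  simp only [Complex.normSq_apply, Complex.add_re, Complex.add_im, Complex.I_re, Complex.I_im]
  nlinarith

lemma abs_add_I_pos {z : ℂ} (hz : 0 < z.im) : 0 < ‖z + Complex.I‖ := by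
  rw [norm_pos_iff]
  intro h
  have : z.im + 1 = 0 := by
    have := congrArg Complex.im h
    simpa using this
  linarith

lemma mk_mem_U {x y : ℝ} (hy : 0 < y) : (x : ℂ) + (y : ℂ) * Complex.I ∈ U := by
  simp [mem_U_iff, hy]

lemma abs_mk_le {x y : ℝ} (hx : 0 ≤ x) (hy : 0 ≤ y) :
    ‖(x : ℂ) + (y : ℂ) * Complex.I‖ ≤ x + y := by
  rw [Complex.norm_def]
  have h1 : Complex.normSq ((x : ℂ) + (y : ℂ) * Complex.I) = x ^ 2 + y ^ 2 := by
    simp [Complex.normSq_apply]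
    ring
  rw [h1]
  calc Real.sqrt (x ^ 2 + y ^ 2) ≤ Real.sqrt ((x + y) ^ 2) := Real.sqrt_le_sqrt (by nlinarith)
    _ = x + y := Real.sqrt_sq (by positivity)

section Divergence

lemma lintegral_inv_Ioi_top {X : ℝ} (hX : 0 < X) :
    ∫⁻ x in Ioi X, ENNReal.ofReal x⁻¹ = ⊤ := by
  by_contra hf
  have hint : IntegrableOn (fun x : ℝ => x⁻¹) (Ioi X) := by
    constructor
    · exact (measurable_inv.aestronglyMeasurable)
    · rw [hasFiniteIntegral_iff_norm]
      have : ∀ᵐ x ∂(volume.restrict (Ioi X)), ENNReal.ofReal ‖(x:ℝ)⁻¹‖ = ENNReal.ofReal x⁻¹ := by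
        refine ae_restrict_of_forall_mem measurableSet_Ioi fun x hx => ?_
        rw [Real.norm_eq_abs, _root_.abs_of_nonneg (inv_nonneg.2 (le_of_lt (hX.trans hx)))]
      rw [lintegral_congr_ae this]
      exact lt_top_iff_ne_top.2 hf
  have : IntegrableOn (fun x : ℝ => x ^ (-1 : ℝ)) (Ioi X) := by
    refine hint.congr_fun (fun x hx => ?_) measurableSet_Ioi
    rw [Real.rpow_neg_one]
  rw [integrableOn_Ioi_rpow_iff hX] at this
  linarith

lemma line_one_lintegral_top {F : ℝ → ℝ} {c X : ℝ} (hc : 0 < c) (hX : 0 < X)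
    (hlow : ∀ x : ℝ, X ≤ x → c * x⁻¹ ≤ F x) :
    ∫⁻ x : ℝ, ENNReal.ofReal (F x) = ⊤ := by
  have h1 : ∫⁻ x in Ioi X, ENNReal.ofReal (c * x⁻¹) = ⊤ := by
    have : ∀ x : ℝ, ENNReal.ofReal (c * x⁻¹) = ENNReal.ofReal c * ENNReal.ofReal x⁻¹ := fun x =>
      ENNReal.ofReal_mul hc.le
    simp_rw [this]
    rw [lintegral_const_mul _ (by fun_prop)]
    rw [lintegral_inv_Ioi_top hX, ENNReal.mul_top]
    simp [hc, ENNReal.ofReal_eq_zero, not_le]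
  refine top_le_iff.1 ?_
  calc (⊤ : ℝ≥0∞) = ∫⁻ x in Ioi X, ENNReal.ofReal (c * x⁻¹) := h1.symm
    _ ≤ ∫⁻ x in Ioi X, ENNReal.ofReal (F x) :=
        setLIntegral_mono' measurableSet_Ioi fun x hx =>
          ENNReal.ofReal_le_ofReal (hlow x (le_of_lt hx))
    _ ≤ ∫⁻ x : ℝ, ENNReal.ofReal (F x) := setLIntegral_le_lintegral _ _

lemma origin_sup_top {G : ℝ → ℝ → ℝ} {c R : ℝ} (hc : 0 < c) (hR : 0 < R)
    (hlow : ∀ x y : ℝ, 0 < x → x < R → 0 < y → y < R →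
      c * (x + y)⁻¹ ≤ G y x) :
    (⨆ y ∈ Ioi (0:ℝ), ∫⁻ x : ℝ, ENNReal.ofReal (G y x)) = ⊤ := by
  have key : ∀ n : ℕ, (n : ℝ≥0∞) ≤ ⨆ y ∈ Ioi (0:ℝ), ∫⁻ x : ℝ, ENNReal.ofReal (G y x) := by
    intro n
    set y : ℝ := R * Real.exp (-((n + 1) / c)) with hy
    have hy0 : 0 < y := mul_pos hR (Real.exp_pos _)
    have hyR : y < R := by
      have h1 : Real.exp (-((n + 1) / c)) < 1 := by
        rw [Real.exp_lt_one_iff]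
        have : 0 < ((n:ℝ) + 1) / c := by positivity
        linarith
      calc y < R * 1 := by
            rw [hy]
            exact mul_lt_mul_of_pos_left h1 hR
        _ = R := mul_one R
    have hint : IntegrableOn (fun x : ℝ => c * (x + y)⁻¹) (Ioo 0 R) := by
      refine (ContinuousOn.integrableOn_Icc ?_).mono_set Ioo_subset_Icc_self
      refine (continuousOn_const.mul ((continuousOn_id.add continuousOn_const).inv₀ ?_))
      intro x hx
      have : 0 < x + y := by
        have := hx.1
        nlinarith
      exact ne_of_gt this
    have hval : ∫ x in Ioo (0:ℝ) R, c * (x + y)⁻¹ = c * Real.log ((R + y) / y) := by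
      rw [← integral_Ioc_eq_integral_Ioo, ← intervalIntegral.integral_of_le hR.le]
      rw [intervalIntegral.integral_const_mul]
      have : (∫ x in (0:ℝ)..R, (x + y)⁻¹) = ∫ u in (0+y)..(R+y), u⁻¹ :=
        intervalIntegral.integral_comp_add_right (fun u => u⁻¹) y
      rw [this, zero_add, integral_inv]
      intro hmem
      rcases hmem with ⟨h1, h2⟩
      rw [min_eq_left (by linarith)] at h1
      linarith
    have hlog : (n : ℝ) ≤ c * Real.log ((R + y) / y) := by
      have h2 : R / y = Real.exp ((n + 1) / c) := by
        rw [hy]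
        rw [div_mul_eq_div_div, div_self hR.ne', one_div, ← Real.exp_neg, neg_neg]
      have h1 : (n + 1) / c ≤ Real.log ((R + y) / y) := by
        calc ((n:ℝ) + 1) / c = Real.log (R / y) := by rw [h2, Real.log_exp]
          _ ≤ Real.log ((R + y) / y) := by
              apply Real.log_le_log (by positivity)
              gcongr
              linarith
      have := mul_le_mul_of_nonneg_left h1 hc.le
      rw [mul_div_cancel₀ _ hc.ne'] at this
      linarith
    have hnn : 0 ≤ᵐ[volume.restrict (Ioo (0:ℝ) R)] fun x => c * (x + y)⁻¹ := by
      refine ae_restrict_of_forall_mem measurableSet_Ioo fun x hx => ?_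
      have : 0 < x + y := by nlinarith [hx.1]
      positivity
    have hle : (n : ℝ≥0∞) ≤ ∫⁻ x : ℝ, ENNReal.ofReal (G y x) := by
      calc (n : ℝ≥0∞) = ENNReal.ofReal (n : ℝ) := (ENNReal.ofReal_natCast n).symm
        _ ≤ ENNReal.ofReal (c * Real.log ((R + y) / y)) := ENNReal.ofReal_le_ofReal hlog
        _ = ENNReal.ofReal (∫ x in Ioo (0:ℝ) R, c * (x + y)⁻¹) := by rw [hval]
        _ = ∫⁻ x in Ioo (0:ℝ) R, ENNReal.ofReal (c * (x + y)⁻¹) :=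
            MeasureTheory.ofReal_integral_eq_lintegral_ofReal hint hnn
        _ ≤ ∫⁻ x in Ioo (0:ℝ) R, ENNReal.ofReal (G y x) :=
            setLIntegral_mono' measurableSet_Ioo fun x hx =>
              ENNReal.ofReal_le_ofReal (hlow x y hx.1 hx.2 hy0 hyR)
        _ ≤ ∫⁻ x : ℝ, ENNReal.ofReal (G y x) := setLIntegral_le_lintegral _ _
    exact le_trans hle (le_iSup₂_of_le y hy0 le_rfl)
  refine le_antisymm le_top ?_
  rw [← ENNReal.iSup_natCast]
  exact iSup_le key

end Divergence

section MemHpAux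

lemma memHp_cpow_mul (p : ℝ) (hp : 1 < p) (a q : ℂ) (ha0 : 0 ≤ a.re)
    (hsum : a.re + q.re = -2 / p) :
    MemHp p (fun z => z ^ a * (z + Complex.I) ^ q) := by
  have hp0 : 0 < p := by linarith
  constructor
  · intro z hz
    have hz' : 0 < z.im := hz
    have h1 : DifferentiableAt ℂ (fun z : ℂ => z ^ a) z :=
      (differentiableAt_id.cpow (differentiableAt_const a) (Or.inr (ne_of_gt hz')))
    have h2 : DifferentiableAt ℂ (fun z : ℂ => (z + Complex.I) ^ q) z := by
      refine ((differentiableAt_id.add_const Complex.I).cpow (differentiableAt_const q) ?_)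
      refine Or.inr ?_
      simp only [id_eq, Complex.add_im, Complex.I_im]
      intro h; linarith
    exact (h1.mul h2).differentiableWithinAt
  · set K : ℝ := Real.exp (Real.pi * |a.im|) * Real.exp (Real.pi * |q.im|) with hK
    have hKpos : 0 < K := by positivity
    have key : ∀ x y : ℝ, 0 < y →
        ‖(((x:ℂ) + (y:ℂ) * Complex.I)) ^ a *
          (((x:ℂ) + (y:ℂ) * Complex.I) + Complex.I) ^ q‖ ^ p ≤ K ^ p * (1 + x ^ 2)⁻¹ := by
      intro x y hy
      set z : ℂ := (x:ℂ) + (y:ℂ) * Complex.I with hzdef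
      have hzim : 0 < z.im := by simp [hzdef, hy]
      have hzne : z ≠ 0 := by
        intro h; rw [h] at hzim; simpa using hzim
      have hzIne : z + Complex.I ≠ 0 := by
        intro h
        have := congrArg Complex.im h
        simp only [Complex.add_im, Complex.I_im, Complex.zero_im] at this
        linarith
      have habsI : 0 < ‖z + Complex.I‖ := abs_add_I_pos hzim
      have h1 : ‖z ^ a * (z + Complex.I) ^ q‖ ≤
          K * ‖z + Complex.I‖ ^ (a.re + q.re) := by
        rw [norm_mul]
        calc ‖z ^ a‖ * ‖(z + Complex.I) ^ q‖
            ≤ (Real.exp (Real.pi * |a.im|) * ‖z‖ ^ a.re) *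
              (Real.exp (Real.pi * |q.im|) * ‖z + Complex.I‖ ^ q.re) := by
              apply mul_le_mul (abs_cpow_upper hzne a) (abs_cpow_upper hzIne q)
                (norm_nonneg _) (by positivity)
          _ ≤ (Real.exp (Real.pi * |a.im|) * ‖z + Complex.I‖ ^ a.re) *
              (Real.exp (Real.pi * |q.im|) * ‖z + Complex.I‖ ^ q.re) := by
              apply mul_le_mul_of_nonneg_right ?_ (by positivity)
              apply mul_le_mul_of_nonneg_left ?_ (Real.exp_nonneg _)
              exact Real.rpow_le_rpow (norm_nonneg _) (abs_le_abs_add_I hzim) ha0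
          _ = K * (‖z + Complex.I‖ ^ a.re * ‖z + Complex.I‖ ^ q.re) := by
              ring
          _ = K * ‖z + Complex.I‖ ^ (a.re + q.re) := by
              rw [← Real.rpow_add habsI]
      have h2 : ‖z ^ a * (z + Complex.I) ^ q‖ ^ p ≤
          (K * ‖z + Complex.I‖ ^ (a.re + q.re)) ^ p :=
        Real.rpow_le_rpow (norm_nonneg _) h1 hp0.le
      have h3 : (K * ‖z + Complex.I‖ ^ (a.re + q.re)) ^ p =
          K ^ p * ‖z + Complex.I‖ ^ ((-2 : ℝ)) := by
        rw [Real.mul_rpow hKpos.le (Real.rpow_nonneg (norm_nonneg _) _)]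
        rw [← Real.rpow_mul habsI.le]
        rw [hsum, div_mul_cancel₀ _ hp0.ne']
      have h4 : K ^ p * ‖z + Complex.I‖ ^ ((-2 : ℝ)) ≤ K ^ p * (1 + x ^ 2)⁻¹ := by
        apply mul_le_mul_of_nonneg_left ?_ (by positivity)
        rw [show ((-2:ℝ)) = -((2:ℕ):ℝ) by norm_num, Real.rpow_neg habsI.le, Real.rpow_natCast]
        apply inv_anti₀ (by positivity)
        have : (‖z + Complex.I‖) ^ (2:ℕ) = Complex.normSq (z + Complex.I) :=
          Complex.sq_norm _
        rw [this]
        simp only [hzdef, Complex.normSq_apply, Complex.add_re, Complex.add_im, Complex.I_re,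
          Complex.I_im, Complex.mul_re, Complex.mul_im, Complex.ofReal_re, Complex.ofReal_im,
          Complex.I_re, Complex.I_im]
        nlinarith
      calc ‖z ^ a * (z + Complex.I) ^ q‖ ^ p
          ≤ (K * ‖z + Complex.I‖ ^ (a.re + q.re)) ^ p := h2
        _ = K ^ p * ‖z + Complex.I‖ ^ ((-2 : ℝ)) := h3
        _ ≤ K ^ p * (1 + x ^ 2)⁻¹ := h4
    -- now bound the sup
    have hmeas : Measurable fun x : ℝ => ENNReal.ofReal ((1 + x ^ 2)⁻¹) :=
      ((measurable_const.add ((measurable_id.pow_const 2))).inv).ennreal_ofReal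
    set B : ℝ≥0∞ := ENNReal.ofReal (K ^ p) * ∫⁻ x : ℝ, ENNReal.ofReal ((1 + x ^ 2)⁻¹) with hB
    have hBlt : B < ⊤ := by
      apply ENNReal.mul_lt_top ENNReal.ofReal_lt_top
      exact integrable_inv_one_add_sq.lintegral_lt_top
    refine lt_of_le_of_lt ?_ hBlt
    rw [hNormPow]
    refine iSup₂_le fun y hy => ?_
    calc (∫⁻ x : ℝ, ENNReal.ofReal (‖(fun z => z ^ a * (z + Complex.I) ^ q) ((x : ℂ) + (y : ℂ) * Complex.I)‖ ^ p))
        ≤ ∫⁻ x : ℝ, ENNReal.ofReal (K ^ p * (1 + x ^ 2)⁻¹) := by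
          apply lintegral_mono fun x => ENNReal.ofReal_le_ofReal (key x y hy)
      _ = B := by
          rw [hB]
          have : ∀ x : ℝ, ENNReal.ofReal (K ^ p * (1 + x ^ 2)⁻¹) =
              ENNReal.ofReal (K ^ p) * ENNReal.ofReal ((1 + x ^ 2)⁻¹) := fun x =>
            ENNReal.ofReal_mul (by positivity)
          simp_rw [this]
          rw [lintegral_const_mul _ hmeas]

end MemHpAux

section Seg

/-- Continuity of `t ↦ g (t z)` on positive reals. -/
lemma contOn_ray {g : ℂ → ℂ} (hgc : ContinuousOn g U) {z : ℂ} (hz : z ∈ U) :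
    ContinuousOn (fun t : ℝ => g ((t : ℂ) * z)) (Ioi (0:ℝ)) := by
  intro t ht
  have htz : (t : ℂ) * z ∈ U := smul_mem_U ht hz
  have h1 : ContinuousAt g ((t : ℂ) * z) :=
    hgc.continuousAt (isOpen_U.mem_nhds htz)
  have h2 : ContinuousAt (fun s : ℝ => (s : ℂ) * z) t :=
    (Complex.continuous_ofReal.mul continuous_const).continuousAt
  have h3 : ContinuousAt (g ∘ fun s : ℝ => (s : ℂ) * z) t :=
    ContinuousAt.comp (f := fun s : ℝ => (s : ℂ) * z) h1 h2
  exact h3.continuousWithinAt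

/-- Bootstrapping: if non-integrability along the whole ray would imply integrability at `z`,
then the segment integrand is interval integrable. -/
lemma ray_integrable {g : ℂ → ℂ} (hgc : ContinuousOn g U) {z : ℂ} (hz : z ∈ U)
    (hray : (∀ s ∈ Ioc (0:ℝ) 1,
        ¬ IntervalIntegrable (fun t : ℝ => g ((t : ℂ) * ((s : ℂ) * z))) volume 0 1) →
      IntervalIntegrable (fun t : ℝ => g ((t : ℂ) * z)) volume 0 1) :
    IntervalIntegrable (fun t : ℝ => g ((t : ℂ) * z)) volume 0 1 := by
  by_contra H
  apply H
  apply hray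
  intro s hs Hs
  apply H
  -- from integrability of the scaled function deduce integrability on `0..s`
  have hfun : (fun t : ℝ => g ((t : ℂ) * ((s : ℂ) * z))) =
      fun t : ℝ => g (((s * t : ℝ) : ℂ) * z) := by
    funext t; push_cast; ring_nf
  rw [hfun] at Hs
  have Hs2 := Hs.comp_mul_left (c := s⁻¹)
  have hsne : s ≠ 0 := ne_of_gt hs.1
  have Hs3 : IntervalIntegrable (fun t : ℝ => g ((t : ℂ) * z)) volume 0 s := by
    have heqf : (fun x : ℝ => g (((s * (s⁻¹ * x) : ℝ) : ℂ) * z)) =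
        fun x : ℝ => g ((x : ℂ) * z) := by
      funext x
      rw [mul_inv_cancel_left₀ hsne]
    have h0 : (0 : ℝ) / s⁻¹ = 0 := by simp
    have h1 : (1 : ℝ) / s⁻¹ = s := by field_simp
    rw [h0, h1, heqf] at Hs2
    exact Hs2
  -- integrability on `s..1` by continuity
  have Hcont : IntervalIntegrable (fun t : ℝ => g ((t : ℂ) * z)) volume s 1 := by
    apply ContinuousOn.intervalIntegrable
    apply (contOn_ray hgc hz).mono
    intro t ht
    rw [Set.uIcc_of_le hs.2] at ht
    exact lt_of_lt_of_le hs.1 ht.1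
  exact Hs3.trans Hcont

/-- If `u z = z ∫₀¹ g(tz) dt` on `U`, `u` differentiable, `g` continuous and segment-integrable,
then `u' = g` on `U`. -/
lemma hasDerivAt_of_seg {g u : ℂ → ℂ} (hgc : ContinuousOn g U)
    (hu : ∀ z ∈ U, DifferentiableAt ℂ u z)
    (hint : ∀ z ∈ U, IntervalIntegrable (fun t : ℝ => g ((t : ℂ) * z)) volume 0 1)
    (hseg : ∀ z ∈ U, u z = z * ∫ t in Ioc (0:ℝ) 1, g ((t : ℂ) * z)) :
    ∀ z₀ ∈ U, HasDerivAt u (g z₀) z₀ := by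
  intro z₀ hz₀
  set z : ℂ := ((2:ℝ) : ℂ) * z₀ with hzdef
  have hzU : z ∈ U := smul_mem_U two_pos hz₀
  have hz₀eq : ((( (1:ℝ)/2 : ℝ)) : ℂ) * z = z₀ := by
    rw [hzdef]; push_cast; ring
  set F : ℝ → ℂ := fun τ => g ((τ : ℂ) * z) with hF
  set q1 : ℝ → ℂ := fun s => ∫ τ in (0:ℝ)..s, F τ with hq1
  -- Claim A
  have claimA : ∀ s ∈ Ioc (0:ℝ) 1, u ((s : ℂ) * z) = z * q1 s := by
    intro s hs
    have hsz : (s : ℂ) * z ∈ U := smul_mem_U hs.1 hzU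
    have h1 : u ((s : ℂ) * z) = ((s : ℂ) * z) * ∫ t in Ioc (0:ℝ) 1, g ((t : ℂ) * ((s : ℂ) * z)) :=
      hseg _ hsz
    have hfun : (fun t : ℝ => g ((t : ℂ) * ((s : ℂ) * z))) = fun t : ℝ => F (s * t) := by
      funext t; rw [hF]; congr 1; push_cast; ring
    have h2 : (∫ t in Ioc (0:ℝ) 1, g ((t : ℂ) * ((s : ℂ) * z))) = ∫ t in (0:ℝ)..1, F (s * t) := by
      rw [hfun, intervalIntegral.integral_of_le zero_le_one]
    have h3 : s • ∫ t in (0:ℝ)..1, F (s * t) = ∫ t in (s*0:ℝ)..(s*1:ℝ), F t :=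
      intervalIntegral.smul_integral_comp_mul_left F s
    rw [h1, h2]
    rw [mul_zero, mul_one] at h3
    have h4 : (∫ t in (0:ℝ)..1, F (s * t)) = s⁻¹ • ∫ t in (0:ℝ)..s, F t := by
      rw [← h3, smul_smul, inv_mul_cancel₀ (ne_of_gt hs.1), one_smul]
    rw [h4, hq1]
    simp only [Complex.real_smul]
    push_cast
    have hsne : (s : ℂ) ≠ 0 := by
      simpa using (ne_of_gt hs.1)
    field_simp
  -- Claim B : derivative of q1 at 1/2
  have hhalf : (1:ℝ)/2 ∈ Ioc (0:ℝ) 1 := by norm_num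
  have hintF : IntervalIntegrable F volume 0 (1/2 : ℝ) := by
    have := hint z hzU
    rw [← hF] at this
    apply this.mono_set
    rw [Set.uIcc_subset_uIcc_iff_le]
    constructor <;> simp [Set.uIcc_of_le] <;> norm_num
  have hcontF : ContinuousAt F (1/2 : ℝ) := by
    have := (contOn_ray hgc hzU).continuousAt (Ioi_mem_nhds (by norm_num : (0:ℝ) < 1/2))
    exact this
  have hmeasF : StronglyMeasurableAtFilter F (𝓝 (1/2 : ℝ)) := by
    apply ContinuousOn.stronglyMeasurableAtFilter isOpen_Ioi (contOn_ray hgc hzU)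
    norm_num
  have claimB : HasDerivAt q1 (F (1/2 : ℝ)) (1/2 : ℝ) :=
    intervalIntegral.integral_hasDerivAt_right hintF hmeasF hcontF
  -- Claim C : derivative of s ↦ u (s z)
  set du : ℂ := deriv u z₀ with hdu
  have hDu : HasDerivAt u du z₀ := (hu z₀ hz₀).hasDerivAt
  have hinner : HasDerivAt (fun s : ℝ => (s : ℂ) * z) z (1/2 : ℝ) := by
    have h1 : HasDerivAt (fun s : ℝ => (s : ℂ)) 1 (1/2 : ℝ) := by
      exact Complex.ofRealCLM.hasDerivAt (x := (1/2 : ℝ))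
    simpa using h1.mul_const z
  have claimC : HasDerivAt (fun s : ℝ => u ((s : ℂ) * z)) (z * du) (1/2 : ℝ) := by
    have := HasDerivAt.scomp_of_eq ((1:ℝ)/2) hDu hinner hz₀eq.symm
    exact this
  -- Claim D : compare
  have hEv : (fun s : ℝ => u ((s : ℂ) * z)) =ᶠ[𝓝 (1/2 : ℝ)] fun s => z * q1 s := by
    have hmem : Ioo (0:ℝ) 1 ∈ 𝓝 (1/2 : ℝ) := isOpen_Ioo.mem_nhds (by norm_num)
    filter_upwards [hmem] with s hs
    exact claimA s ⟨hs.1, le_of_lt hs.2⟩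
  have claimC' : HasDerivAt (fun s : ℝ => z * q1 s) (z * du) (1/2 : ℝ) :=
    claimC.congr_of_eventuallyEq hEv.symm
  have claimB' : HasDerivAt (fun s : ℝ => z * q1 s) (z * F (1/2 : ℝ)) (1/2 : ℝ) :=
    claimB.const_mul z
  have huniq : z * du = z * F (1/2 : ℝ) := claimC'.unique claimB'
  have hzne : z ≠ 0 := ne_zero_of_mem_U hzU
  have : du = F (1/2 : ℝ) := mul_left_cancel₀ hzne huniq
  have hFval : F (1/2 : ℝ) = g z₀ := by rw [hF]; simp only []; rw [hz₀eq]
  rw [hFval] at this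
  rw [← this]
  exact hDu

end Seg


section Cases

lemma rpow_lower_cycle {p x c₂ gv : ℝ} (hp0 : 0 < p) (hx0 : 0 < x) (hc₂ : 0 ≤ c₂)
    (hg : c₂ * x ^ (-(1/p)) ≤ gv) : c₂ ^ p * x⁻¹ ≤ gv ^ p := by
  have h1 : (c₂ * x ^ (-(1/p))) ^ p ≤ gv ^ p :=
    Real.rpow_le_rpow (by positivity) hg hp0.le
  calc c₂ ^ p * x⁻¹ = (c₂ * x ^ (-(1/p))) ^ p := by
        rw [Real.mul_rpow hc₂ (by positivity), ← Real.rpow_mul hx0.le,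
          show (-(1/p))*p = -1 by field_simp, Real.rpow_neg_one]
    _ ≤ gv ^ p := h1

lemma case_infty {p : ℝ} (hp : 1 < p) (g : ℂ → ℂ)
    {a β C' γ : ℂ} (hane : a ≠ 0) (hC : C' ≠ 0)
    (hare : a.re = (p - 1) / p) (hβre : β.re = -(1 / p))
    (hgform : ∀ z ∈ U, g z = z ^ (a - 1) *
      (a * C' + (a * γ * (z + Complex.I) ^ β + a * z * (z + Complex.I) ^ (β - 1)))) :
    hNormPow p g = ⊤ := by
  have hp0 : 0 < p := by linarith
  set ca : ℝ := ‖a * C'‖ with hca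
  have hca0 : 0 < ca := by
    rw [hca, norm_pos_iff]
    exact mul_ne_zero hane hC
  set M : ℝ := ‖a * γ‖ * Real.exp (Real.pi * |β.im|) +
      ‖a‖ * Real.exp (Real.pi * |(β - 1).im|) with hM
  have hM0 : 0 ≤ M := by positivity
  set c₂ : ℝ := Real.exp (-(Real.pi * |(a - 1).im|)) * ((2:ℝ) ^ (-(1/p)) * (ca / 2)) with hc₂
  have hc₂0 : 0 < c₂ := by
    rw [hc₂]
    have := Real.exp_pos (-(Real.pi * |(a - 1).im|))
    have h2 : (0:ℝ) < (2:ℝ) ^ (-(1/p)) := Real.rpow_pos_of_pos two_pos _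
    positivity
  set B : ℝ := 2 * (M + 1) / ca with hB
  have hB0 : 0 < B := by positivity
  set X : ℝ := max 1 (B ^ p) with hX
  have hX0 : 0 < X := lt_of_lt_of_le one_pos (le_max_left _ _)
  have key : ∀ x : ℝ, X ≤ x → c₂ ^ p * x⁻¹ ≤
      ‖g ((x : ℂ) + ((1:ℝ) : ℂ) * Complex.I)‖ ^ p := by
    intro x hx
    have hx1 : (1:ℝ) ≤ x := le_trans (le_max_left _ _) hx
    have hx0 : 0 < x := lt_of_lt_of_le one_pos hx1
    have hxB : B ^ p ≤ x := le_trans (le_max_right _ _) hx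
    set z : ℂ := (x : ℂ) + Complex.I with hzdef
    have hzU : z ∈ U := by
      rw [hzdef, mem_U_iff]
      simp
    have hzim : 0 < z.im := mem_U_iff.1 hzU
    have hzne : z ≠ 0 := ne_zero_of_mem_U hzU
    have hzI : z + Complex.I ≠ 0 := ne_zero_of_mem_U (add_I_mem_U hzU)
    have habsZI : 0 < ‖z + Complex.I‖ := abs_add_I_pos hzim
    have habsZ : 0 < ‖z‖ := norm_pos_iff.mpr hzne
    have hrge : x ≤ ‖z + Complex.I‖ := by
      have h1 : (z + Complex.I).re = x := by simp [hzdef]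
      calc x = (z + Complex.I).re := h1.symm
        _ ≤ |(z + Complex.I).re| := le_abs_self _
        _ ≤ ‖z + Complex.I‖ := Complex.abs_re_le_norm _
    have hZIneg : ‖z + Complex.I‖ ^ β.re ≤ x ^ (-(1/p)) := by
      rw [hβre]
      exact Real.rpow_le_rpow_of_nonpos hx0 hrge (neg_nonpos.mpr (by positivity))
    -- tail bound
    have t1 : ‖a * γ * (z + Complex.I) ^ β‖ ≤
        ‖a * γ‖ * Real.exp (Real.pi * |β.im|) * x ^ (-(1/p)) := by
      rw [norm_mul]
      calc ‖a * γ‖ * ‖(z + Complex.I) ^ β‖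
          ≤ ‖a * γ‖ * (Real.exp (Real.pi * |β.im|) *
            ‖z + Complex.I‖ ^ β.re) :=
            mul_le_mul_of_nonneg_left (abs_cpow_upper hzI β) (norm_nonneg _)
        _ ≤ ‖a * γ‖ * (Real.exp (Real.pi * |β.im|) * x ^ (-(1/p))) := by
            apply mul_le_mul_of_nonneg_left ?_ (norm_nonneg _)
            exact mul_le_mul_of_nonneg_left hZIneg (Real.exp_nonneg _)
        _ = ‖a * γ‖ * Real.exp (Real.pi * |β.im|) * x ^ (-(1/p)) := by ring
    have t2 : ‖a * z * (z + Complex.I) ^ (β - 1)‖ ≤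
        ‖a‖ * Real.exp (Real.pi * |(β - 1).im|) * x ^ (-(1/p)) := by
      rw [norm_mul, norm_mul]
      have h1 : ‖(z + Complex.I) ^ (β - 1)‖ ≤
          Real.exp (Real.pi * |(β - 1).im|) * ‖z + Complex.I‖ ^ ((β:ℂ) - 1).re :=
        abs_cpow_upper hzI (β - 1)
      have h2 : ‖z‖ * ‖(z + Complex.I) ^ (β - 1)‖ ≤
          Real.exp (Real.pi * |(β - 1).im|) * ‖z + Complex.I‖ ^ β.re := by
        have h3 : ‖z‖ * ‖(z + Complex.I) ^ (β - 1)‖ ≤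
            ‖z + Complex.I‖ *
              (Real.exp (Real.pi * |(β - 1).im|) * ‖z + Complex.I‖ ^ ((β:ℂ) - 1).re) :=
          mul_le_mul (abs_le_abs_add_I hzim) h1 (norm_nonneg _) habsZI.le
        have h4 : ((β:ℂ) - 1).re = β.re - 1 := by simp
        have h5 : ‖z + Complex.I‖ * ‖z + Complex.I‖ ^ (β.re - 1) =
            ‖z + Complex.I‖ ^ β.re := by
          nth_rewrite 1 [← Real.rpow_one (‖z + Complex.I‖)]
          rw [← Real.rpow_add habsZI]
          ring_nf
        calc ‖z‖ * ‖(z + Complex.I) ^ (β - 1)‖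
            ≤ ‖z + Complex.I‖ *
              (Real.exp (Real.pi * |(β - 1).im|) * ‖z + Complex.I‖ ^ ((β:ℂ) - 1).re) := h3
          _ = Real.exp (Real.pi * |(β - 1).im|) *
              (‖z + Complex.I‖ * ‖z + Complex.I‖ ^ (β.re - 1)) := by
              rw [h4]; ring
          _ = Real.exp (Real.pi * |(β - 1).im|) * ‖z + Complex.I‖ ^ β.re := by
              rw [h5]
      calc ‖a‖ * ‖z‖ * ‖(z + Complex.I) ^ (β - 1)‖
          = ‖a‖ * (‖z‖ * ‖(z + Complex.I) ^ (β - 1)‖) := by ring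
        _ ≤ ‖a‖ * (Real.exp (Real.pi * |(β - 1).im|) *
            ‖z + Complex.I‖ ^ β.re) :=
            mul_le_mul_of_nonneg_left h2 (norm_nonneg _)
        _ ≤ ‖a‖ * (Real.exp (Real.pi * |(β - 1).im|) * x ^ (-(1/p))) := by
            apply mul_le_mul_of_nonneg_left ?_ (norm_nonneg _)
            exact mul_le_mul_of_nonneg_left hZIneg (Real.exp_nonneg _)
        _ = ‖a‖ * Real.exp (Real.pi * |(β - 1).im|) * x ^ (-(1/p)) := by ring
    set T : ℂ := a * γ * (z + Complex.I) ^ β + a * z * (z + Complex.I) ^ (β - 1) with hT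
    have hTabs : ‖T‖ ≤ M * x ^ (-(1/p)) := by
      rw [hT, hM]
      calc ‖a * γ * (z + Complex.I) ^ β + a * z * (z + Complex.I) ^ (β - 1)‖
          ≤ ‖a * γ * (z + Complex.I) ^ β‖ +
            ‖a * z * (z + Complex.I) ^ (β - 1)‖ := norm_add_le _ _
        _ ≤ ‖a * γ‖ * Real.exp (Real.pi * |β.im|) * x ^ (-(1/p)) +
            ‖a‖ * Real.exp (Real.pi * |(β - 1).im|) * x ^ (-(1/p)) := add_le_add t1 t2
        _ = (‖a * γ‖ * Real.exp (Real.pi * |β.im|) +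
            ‖a‖ * Real.exp (Real.pi * |(β - 1).im|)) * x ^ (-(1/p)) := by ring
    -- Mx^{-1/p} ≤ ca/2
    have hsmall : M * x ^ (-(1/p)) ≤ ca / 2 := by
      have hxp : B ≤ x ^ (1/p) := by
        have h1 : (B ^ p) ^ (1/p) ≤ x ^ (1/p) :=
          Real.rpow_le_rpow (by positivity) hxB (by positivity)
        rwa [← Real.rpow_mul hB0.le, mul_one_div_cancel hp0.ne', Real.rpow_one] at h1
      have hxinv : x ^ (-(1/p)) = (x ^ (1/p))⁻¹ := by
        rw [Real.rpow_neg hx0.le]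
      have hxp0 : 0 < x ^ (1/p) := Real.rpow_pos_of_pos hx0 _
      rw [hxinv]
      have h2 : M * (x ^ (1/p))⁻¹ ≤ M * B⁻¹ := by
        apply mul_le_mul_of_nonneg_left ?_ hM0
        exact inv_anti₀ hB0 hxp
      refine le_trans h2 ?_
      rw [hB]
      rw [inv_div, ← mul_div_assoc]
      rw [div_le_div_iff₀ (by positivity) (by norm_num)]
      nlinarith [hca0]
    -- |E| ≥ ca/2
    have hE : ca / 2 ≤ ‖a * C' + T‖ := by
      have h1 : ca - ‖T‖ ≤ ‖a * C' + T‖ := by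
        have h2 : ‖a * C'‖ - ‖-T‖ ≤ ‖a * C' - -T‖ := norm_sub_norm_le _ _
        simpa [hca, sub_neg_eq_add] using h2
      have h3 : ‖T‖ ≤ ca / 2 := le_trans hTabs hsmall
      linarith
    -- |z^{a-1}|
    have hre1 : ((a:ℂ) - 1).re = -(1/p) := by
      simp only [Complex.sub_re, Complex.one_re, hare]
      field_simp
      ring
    have hzabs_le : ‖z‖ ≤ 2 * x := by
      have h1 : ‖z‖ ≤ x + 1 := by
        have := abs_mk_le (x := x) (y := 1) (by linarith) (by norm_num)
        simpa [hzdef] using this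
      linarith
    have hzpow : (2 * x) ^ (-(1/p)) ≤ ‖z‖ ^ (-(1/p)) :=
      Real.rpow_le_rpow_of_nonpos habsZ hzabs_le (neg_nonpos.mpr (by positivity))
    have hglow : c₂ * x ^ (-(1/p)) ≤ ‖g z‖ := by
      rw [hgform z hzU, norm_mul]
      have h1 : Real.exp (-(Real.pi * |((a:ℂ) - 1).im|)) * ‖z‖ ^ ((a:ℂ) - 1).re ≤
          ‖z ^ (a - 1)‖ := abs_cpow_lower hzne (a - 1)
      rw [hre1] at h1
      have h2 : (2 * x) ^ (-(1/p)) = (2:ℝ) ^ (-(1/p)) * x ^ (-(1/p)) :=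
        Real.mul_rpow (by norm_num) hx0.le
      calc c₂ * x ^ (-(1/p))
          = Real.exp (-(Real.pi * |((a:ℂ) - 1).im|)) * ((2:ℝ) ^ (-(1/p)) * x ^ (-(1/p))) * (ca / 2) := by
            rw [hc₂]
            simp only [Complex.sub_im, Complex.one_im, sub_zero]
            ring
        _ = Real.exp (-(Real.pi * |((a:ℂ) - 1).im|)) * (2 * x) ^ (-(1/p)) * (ca / 2) := by
            rw [h2]
        _ ≤ Real.exp (-(Real.pi * |((a:ℂ) - 1).im|)) * ‖z‖ ^ (-(1/p)) * (ca / 2) := by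
            apply mul_le_mul_of_nonneg_right ?_ (by positivity)
            exact mul_le_mul_of_nonneg_left hzpow (Real.exp_nonneg _)
        _ ≤ ‖z ^ (a - 1)‖ * (ca / 2) :=
            mul_le_mul_of_nonneg_right h1 (by positivity)
        _ ≤ ‖z ^ (a - 1)‖ * ‖a * C' + T‖ :=
            mul_le_mul_of_nonneg_left hE (norm_nonneg _)
    have hcast : ((x : ℂ) + ((1:ℝ) : ℂ) * Complex.I) = z := by
      rw [hzdef]; norm_num
    rw [hcast]
    exact rpow_lower_cycle hp0 hx0 hc₂0.le hglow
  have hline : ∫⁻ x : ℝ, ENNReal.ofReal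
      (‖g ((x : ℂ) + ((1:ℝ) : ℂ) * Complex.I)‖ ^ p) = ⊤ :=
    line_one_lintegral_top (by positivity) hX0 key
  refine top_le_iff.1 ?_
  rw [← hline]
  simp only [hNormPow]
  exact le_iSup₂_of_le (1:ℝ) (by norm_num) le_rfl

lemma case_origin {p : ℝ} (hp : 1 < p) (g : ℂ → ℂ)
    {a β γ : ℂ} (hane : a ≠ 0) (hγ : γ ≠ 0)
    (hare : a.re = (p - 1) / p) (hβre : β.re = -(1 / p))
    (hgform : ∀ z ∈ U, g z = z ^ (a - 1) *
      (a * γ * (z + Complex.I) ^ β + a * z * (z + Complex.I) ^ (β - 1))) :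
    hNormPow p g = ⊤ := by
  have hp0 : 0 < p := by linarith
  set Φ : ℂ → ℂ := fun ζ => a * γ * (ζ + Complex.I) ^ β + a * ζ * (ζ + Complex.I) ^ (β - 1) with hΦ
  have hslitI : ((0:ℂ) + Complex.I) ∈ Complex.slitPlane := Or.inr (by simp)
  have hΦc : ContinuousAt Φ 0 := by
    have hadd : ContinuousAt (fun ζ : ℂ => ζ + Complex.I) 0 :=
      (continuous_id.add continuous_const).continuousAt
    have h1 : ContinuousAt (fun ζ : ℂ => (ζ + Complex.I) ^ β) 0 :=
      ContinuousAt.comp (f := fun ζ : ℂ => ζ + Complex.I)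
        (continuousAt_cpow_const hslitI) hadd
    have h2 : ContinuousAt (fun ζ : ℂ => (ζ + Complex.I) ^ (β - 1)) 0 :=
      ContinuousAt.comp (f := fun ζ : ℂ => ζ + Complex.I)
        (continuousAt_cpow_const hslitI) hadd
    exact ((continuousAt_const.mul h1).add ((continuousAt_const.mul continuousAt_id).mul h2))
  have hΦ0 : Φ 0 = a * γ * Complex.I ^ β := by
    rw [hΦ]
    simp
  have hD0 : Φ 0 ≠ 0 := by
    rw [hΦ0]
    exact mul_ne_zero (mul_ne_zero hane hγ) (cpow_ne_zero_of_ne_zero Complex.I_ne_zero β)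
  set μ : ℝ := ‖Φ 0‖ / 2 with hμ
  have hμ0 : 0 < μ := by
    rw [hμ]
    have := norm_pos_iff.mpr hD0
    positivity
  obtain ⟨δ, hδ0, hδ⟩ := Metric.continuousAt_iff.1 hΦc μ hμ0
  set R : ℝ := δ / 2 with hR
  have hR0 : 0 < R := by positivity
  set c₃ : ℝ := Real.exp (-(Real.pi * |((a:ℂ) - 1).im|)) * μ with hc₃
  have hc₃0 : 0 < c₃ := by positivity
  have key : ∀ x y : ℝ, 0 < x → x < R → 0 < y → y < R →
      (c₃ ^ p) * (x + y)⁻¹ ≤ ‖g ((x : ℂ) + (y : ℂ) * Complex.I)‖ ^ p := by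
    intro x y hx hxR hy hyR
    set z : ℂ := (x : ℂ) + (y : ℂ) * Complex.I with hzdef
    have hzU : z ∈ U := mk_mem_U hy
    have hzne : z ≠ 0 := ne_zero_of_mem_U hzU
    have habsZ : 0 < ‖z‖ := norm_pos_iff.mpr hzne
    have hzlt : ‖z‖ < δ := by
      have h1 : ‖z‖ ≤ x + y := abs_mk_le hx.le hy.le
      have h2 : x + y < δ := by rw [hR] at hxR hyR; linarith
      linarith
    have hΦz : μ ≤ ‖Φ z‖ := by
      have h1 : dist z 0 < δ := by
        rw [Complex.dist_eq, sub_zero]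
        exact hzlt
      have h2 := hδ h1
      rw [Complex.dist_eq] at h2
      have h3 : ‖Φ 0‖ - ‖Φ z - Φ 0‖ ≤ ‖Φ z‖ := by
        have h5 := norm_sub_norm_le (Φ 0) (Φ 0 - Φ z)
        simp only [sub_sub_cancel] at h5
        have h4 : ‖Φ 0 - Φ z‖ = ‖Φ z - Φ 0‖ := by
          rw [← norm_neg, neg_sub]
        linarith [h5, h4]
      have h6 : μ = ‖Φ 0‖ / 2 := hμ
      linarith
    have hzle : ‖z‖ ≤ x + y := abs_mk_le hx.le hy.le
    have hzpow : (x + y) ^ (-(1/p)) ≤ ‖z‖ ^ (-(1/p)) :=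
      Real.rpow_le_rpow_of_nonpos habsZ hzle (neg_nonpos.mpr (by positivity))
    have hglow : c₃ * (x + y) ^ (-(1/p)) ≤ ‖g z‖ := by
      have hform := hgform z hzU
      have hre1 : ((a:ℂ) - 1).re = -(1/p) := by
        simp only [Complex.sub_re, Complex.one_re, hare]
        field_simp
        ring
      have h1 : Real.exp (-(Real.pi * |((a:ℂ) - 1).im|)) * ‖z‖ ^ ((a:ℂ) - 1).re ≤
          ‖z ^ (a - 1)‖ := abs_cpow_lower hzne (a - 1)
      rw [hre1] at h1
      rw [hform, norm_mul]
      calc c₃ * (x + y) ^ (-(1/p))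
          = Real.exp (-(Real.pi * |((a:ℂ) - 1).im|)) * (x + y) ^ (-(1/p)) * μ := by
            rw [hc₃]; ring
        _ ≤ Real.exp (-(Real.pi * |((a:ℂ) - 1).im|)) * ‖z‖ ^ (-(1/p)) * μ := by
            apply mul_le_mul_of_nonneg_right ?_ hμ0.le
            exact mul_le_mul_of_nonneg_left hzpow (Real.exp_nonneg _)
        _ ≤ ‖z ^ (a - 1)‖ * μ := mul_le_mul_of_nonneg_right h1 hμ0.le
        _ ≤ ‖z ^ (a - 1)‖ * ‖Φ z‖ :=
            mul_le_mul_of_nonneg_left hΦz (norm_nonneg _)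
        _ = ‖z ^ (a - 1)‖ * ‖a * γ * (z + Complex.I) ^ β + a * z * (z + Complex.I) ^ (β - 1)‖ := by rw [hΦ]
    have hxy0 : 0 < x + y := by linarith
    exact rpow_lower_cycle hp0 hxy0 hc₃0.le hglow
  have := origin_sup_top (G := fun y x => ‖g ((x : ℂ) + (y : ℂ) * Complex.I)‖ ^ p)
    (c := c₃ ^ p) (by positivity) hR0 key
  simpa only [hNormPow] using this

end Cases

end
end CesaroAux

set_option maxHeartbeats 1000000 in
open CesaroAux Set in
/-- every nonzero `w` on the circle `|w − p/(2(p−1))| = p/(2(p−1))` is in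
the spectrum of `𝒞` on `H^p(𝕌)`: some `h ∈ H^p(𝕌)` is not of the form `w g − 𝒞(g)`
with `g ∈ H^p(𝕌)`. -/
theorem cesaro_spectrum_circle (p : ℝ) (hp : 1 < p) (w : ℂ) (hw0 : w ≠ 0)
    (hw : ‖w - (p / (2 * (p - 1)) : ℝ)‖ = p / (2 * (p - 1))) :
    ∃ h : ℂ → ℂ, MemHp p h ∧
      ∀ g : ℂ → ℂ, MemHp p g → ¬ ∀ z : ℂ, 0 < z.im → w * g z - cesaro g z = h z := by
  classical
  have hp0 : 0 < p := by linarith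
  have hp1 : 0 < p - 1 := by linarith
  set cc : ℝ := p / (2 * (p - 1)) with hcc
  have hcc0 : 0 < cc := by rw [hcc]; positivity
  set a : ℂ := w⁻¹ with hadef
  have hane : a ≠ 0 := inv_ne_zero hw0
  have haw : a * w = 1 := inv_mul_cancel₀ hw0
  -- real part of `a`
  have hsq : Complex.normSq (w - (cc : ℂ)) = cc ^ 2 := by
    have h1 := congrArg (fun r : ℝ => r ^ 2) hw
    rw [Complex.sq_norm] at h1
    exact h1
  have hns : Complex.normSq w = 2 * cc * w.re := by
    have h1 : (w.re - cc) ^ 2 + w.im ^ 2 = cc ^ 2 := by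
      have := hsq
      simp only [Complex.normSq_apply, Complex.sub_re, Complex.sub_im, Complex.ofReal_re,
        Complex.ofReal_im, sub_zero] at this
      nlinarith [this]
    have h2 : Complex.normSq w = w.re ^ 2 + w.im ^ 2 := by
      simp only [Complex.normSq_apply]; ring
    nlinarith [h1, h2]
  have hwre : w.re ≠ 0 := by
    intro h0
    have h1 : Complex.normSq w = 0 := by rw [hns, h0]; ring
    exact hw0 (Complex.normSq_eq_zero.1 h1)
  have ha : a.re = (p - 1) / p := by
    rw [hadef, Complex.inv_re, hns, hcc]
    field_simp
  have ha0 : (0:ℝ) ≤ a.re := by rw [ha]; positivity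
  set β : ℂ := 1 - a - ((2 / p : ℝ) : ℂ) with hβdef
  have hβre : β.re = -(1 / p) := by
    rw [hβdef]
    simp only [Complex.sub_re, Complex.one_re, Complex.ofReal_re, ha]
    field_simp
    ring
  have hβne : β ≠ 0 := by
    intro hcon
    have h0 : β.re = 0 := by rw [hcon]; simp
    rw [hβre] at h0
    have h1 : (0:ℝ) < 1 / p := by positivity
    linarith
  set γ : ℂ := a / β with hγdef
  have hγβ : γ * β = a := div_mul_cancel₀ a hβne
  have hγne : γ ≠ 0 := div_ne_zero hane hβne
  set q : ℂ := β - 1 with hqdef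
  have hqre : q.re = -(1 / p) - 1 := by
    rw [hqdef]; simp only [Complex.sub_re, Complex.one_re, hβre]
  have hsum : a.re + q.re = -2 / p := by
    rw [hqre, ha]
    field_simp
    ring
  set hfun : ℂ → ℂ := fun z => z ^ a * (z + Complex.I) ^ q with hfundef
  refine ⟨hfun, memHp_cpow_mul p hp a q ha0 hsum, ?_⟩
  intro g hg heq
  obtain ⟨hgdiff, hgfin⟩ := hg
  have hgc : ContinuousOn g U := hgdiff.continuousOn
  have hgda : ∀ z ∈ U, DifferentiableAt ℂ g z := fun z hz =>
    hgdiff.differentiableAt (isOpen_U.mem_nhds hz)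
  -- differentiability and continuity of hfun on U
  have hhdiff : ∀ z ∈ U, DifferentiableAt ℂ hfun z := by
    intro z hz
    have h1 : DifferentiableAt ℂ (fun ζ : ℂ => ζ ^ a) z :=
      differentiableAt_id.cpow (differentiableAt_const a) (mem_slit_of_mem_U hz)
    have h2 : DifferentiableAt ℂ (fun ζ : ℂ => (ζ + Complex.I) ^ q) z :=
      (differentiableAt_id.add_const Complex.I).cpow (differentiableAt_const q)
        (mem_slit_of_mem_U (add_I_mem_U hz))
    exact h1.mul h2
  have hhcU : ContinuousOn hfun U := fun ζ hζ => (hhdiff ζ hζ).continuousAt.continuousWithinAt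
  -- bound for `a • hfun` along segments
  have hbound : ∀ z ∈ U, IntegrableOn (fun t : ℝ => a * hfun ((t : ℂ) * z)) (Ioc (0:ℝ) 1)
      volume := by
    intro z hz
    set Mb : ℝ := ‖a‖ * (Real.exp (Real.pi * |a.im|) * max 1 (‖z‖) ^ a.re *
      Real.exp (Real.pi * |q.im|)) with hMb
    refine ⟨(continuousOn_const.mul ((contOn_ray hhcU hz).mono
        Ioc_subset_Ioi_self)).aestronglyMeasurable measurableSet_Ioc,
      HasFiniteIntegral.restrict_of_bounded (C := Mb) measure_Ioc_lt_top ?_⟩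
    refine ae_restrict_of_forall_mem measurableSet_Ioc fun t ht => ?_
    have htz : (t : ℂ) * z ∈ U := smul_mem_U ht.1 hz
    have htzne : (t : ℂ) * z ≠ 0 := ne_zero_of_mem_U htz
    have htzI : (t : ℂ) * z + Complex.I ≠ 0 := ne_zero_of_mem_U (add_I_mem_U htz)
    have habs1 : ‖((t : ℂ) * z) ^ a‖ ≤
        Real.exp (Real.pi * |a.im|) * max 1 (‖z‖) ^ a.re := by
      refine le_trans (abs_cpow_upper htzne a) ?_
      apply mul_le_mul_of_nonneg_left ?_ (Real.exp_nonneg _)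
      apply Real.rpow_le_rpow (norm_nonneg _) ?_ ha0
      calc ‖(t : ℂ) * z‖ = |t| * ‖z‖ := by
            rw [norm_mul, Complex.norm_real, Real.norm_eq_abs]
        _ ≤ 1 * ‖z‖ := by
            apply mul_le_mul_of_nonneg_right ?_ (norm_nonneg _)
            rw [abs_of_pos ht.1]; exact ht.2
        _ = ‖z‖ := one_mul _
        _ ≤ max 1 (‖z‖) := le_max_right _ _
    have habs2 : ‖(((t : ℂ) * z) + Complex.I) ^ q‖ ≤
        Real.exp (Real.pi * |q.im|) := by
      refine le_trans (abs_cpow_upper htzI q) ?_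
      nth_rewrite 2 [← mul_one (Real.exp (Real.pi * |q.im|))]
      apply mul_le_mul_of_nonneg_left ?_ (Real.exp_nonneg _)
      apply Real.rpow_le_one_of_one_le_of_nonpos
      · have h1 : ((t : ℂ) * z + Complex.I).im = t * z.im + 1 := by
          simp [Complex.add_im, Complex.mul_im]
        have h2 : (1:ℝ) ≤ ((t : ℂ) * z + Complex.I).im := by
          rw [h1]
          nlinarith [ht.1, mem_U_iff.1 hz]
        calc (1:ℝ) ≤ ((t : ℂ) * z + Complex.I).im := h2
          _ ≤ |((t : ℂ) * z + Complex.I).im| := le_abs_self _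
          _ ≤ ‖(t : ℂ) * z + Complex.I‖ := Complex.abs_im_le_norm _
      · rw [hqre]
        have : (0:ℝ) < 1/p := by positivity
        linarith
    have hmax0 : (0:ℝ) ≤ max 1 (‖z‖) ^ a.re :=
      Real.rpow_nonneg (le_trans zero_le_one (le_max_left _ _)) _
    calc ‖a * hfun ((t : ℂ) * z)‖
        = ‖a‖ * (‖(((t : ℂ) * z)) ^ a‖ *
          ‖(((t : ℂ) * z) + Complex.I) ^ q‖) := by
          rw [hfundef]
          simp only [norm_mul]
      _ ≤ ‖a‖ * ((Real.exp (Real.pi * |a.im|) * max 1 (‖z‖) ^ a.re) *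
          Real.exp (Real.pi * |q.im|)) := by
          apply mul_le_mul_of_nonneg_left ?_ (norm_nonneg _)
          exact mul_le_mul habs1 habs2 (norm_nonneg _) (by positivity)
      _ = Mb := by rw [hMb]
  -- segment integrability of g
  have hint : ∀ z ∈ U, IntervalIntegrable (fun t : ℝ => g ((t : ℂ) * z)) volume 0 1 := by
    intro z hz
    refine ray_integrable hgc hz ?_
    intro hall
    have hgeq : ∀ t ∈ Ioc (0:ℝ) 1, g ((t : ℂ) * z) = a * hfun ((t : ℂ) * z) := by
      intro t ht
      have htz : (t : ℂ) * z ∈ U := smul_mem_U ht.1 hz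
      have hnint : ¬ IntegrableOn (fun τ : ℝ => g ((τ : ℂ) * ((t : ℂ) * z))) (Ioc (0:ℝ) 1)
          volume := by
        intro hcon
        exact (hall t ht) ((intervalIntegrable_iff_integrableOn_Ioc_of_le zero_le_one).2 hcon)
      have hs0 : segInt0 g ((t : ℂ) * z) = 0 := by
        rw [segInt0, integral_undef hnint, mul_zero]
      have hWz := heq ((t : ℂ) * z) (mem_U_iff.1 htz)
      rw [cesaro, hs0, mul_zero, sub_zero] at hWz
      linear_combination a * hWz - g ((t : ℂ) * z) * haw
    rw [intervalIntegrable_iff_integrableOn_Ioc_of_le zero_le_one]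
    exact (hbound z hz).congr_fun (fun t ht => (hgeq t ht).symm) measurableSet_Ioc
  -- the function u and its derivative
  set k : ℂ → ℂ := fun ζ => w * g ζ - hfun ζ with hkdef
  set u : ℂ → ℂ := fun ζ => ζ * k ζ with hudef
  have hkdiff : ∀ z ∈ U, DifferentiableAt ℂ k z := fun z hz =>
    ((differentiableAt_const w).mul (hgda z hz)).sub (hhdiff z hz)
  have hudiff : ∀ z ∈ U, DifferentiableAt ℂ u z := fun z hz =>
    differentiableAt_id.mul (hkdiff z hz)
  have hseg2 : ∀ z ∈ U, u z = z * ∫ t in Ioc (0:ℝ) 1, g ((t : ℂ) * z) := by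
    intro z hz
    have hWz : k z = cesaro g z := by
      have := heq z (mem_U_iff.1 hz)
      rw [hkdef]
      linear_combination this
    have h2 : u z = z * cesaro g z := by
      show z * k z = z * cesaro g z
      rw [hWz]
    rw [h2, cesaro, ← mul_assoc, mul_inv_cancel₀ (ne_zero_of_mem_U hz), one_mul, segInt0]
  have hu' : ∀ z ∈ U, HasDerivAt u (g z) z := hasDerivAt_of_seg hgc hudiff hint hseg2
  -- the ODE for k
  have hodek : ∀ z ∈ U, z * deriv k z = (a - 1) * k z + a * hfun z := by
    intro z hz
    have hkd : HasDerivAt k (deriv k z) z := (hkdiff z hz).hasDerivAt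
    have h1 : HasDerivAt (fun ζ => ζ * k ζ) (k z + z * deriv k z) z := by
      have := (hasDerivAt_id' z).mul hkd
      simp only [one_mul] at this
      exact this
    have h2 : HasDerivAt u (g z) z := hu' z hz
    have h4 : k z + z * deriv k z = g z := h1.unique h2
    have hkz : k z = w * g z - hfun z := rfl
    have h5 : g z = a * k z + a * hfun z := by
      linear_combination (-a) * hkz + (-(g z)) * haw
    linear_combination h4 + h5
  -- the auxiliary function m has zero derivative
  set m : ℂ → ℂ := fun ζ => k ζ * ζ ^ ((1:ℂ) - a) - γ * (ζ + Complex.I) ^ β with hmdef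
  have hm' : ∀ z ∈ U, HasDerivAt m 0 z := by
    intro z hz
    have hzne : z ≠ 0 := ne_zero_of_mem_U hz
    have hd1 : HasDerivAt (fun ζ : ℂ => ζ ^ ((1:ℂ) - a)) (((1:ℂ) - a) * z ^ ((1:ℂ) - a - 1)) z :=
      (Complex.hasStrictDerivAt_cpow_const (mem_slit_of_mem_U hz)).hasDerivAt
    have hd2 : HasDerivAt (fun ζ : ℂ => (ζ + Complex.I) ^ β)
        (β * (z + Complex.I) ^ (β - 1) * 1) z :=
      HasDerivAt.cpow_const ((hasDerivAt_id z).add_const Complex.I)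
        (mem_slit_of_mem_U (add_I_mem_U hz))
    have hd3 : HasDerivAt m
        (deriv k z * z ^ ((1:ℂ) - a) + k z * (((1:ℂ) - a) * z ^ ((1:ℂ) - a - 1)) -
          γ * (β * (z + Complex.I) ^ (β - 1) * 1)) z :=
      (((hkdiff z hz).hasDerivAt.mul hd1).sub (hd2.const_mul γ))
    have e1 : z ^ ((1:ℂ) - a - 1) = z ^ (-a) := by
      rw [show (1:ℂ) - a - 1 = -a by ring]
    have e2 : z ^ ((1:ℂ) - a) = z * z ^ (-a) := by
      rw [show (1:ℂ) - a = 1 + -a by ring, Complex.cpow_add _ _ hzne, Complex.cpow_one]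
    have e3 : z ^ (-a) * z ^ a = 1 := by
      rw [← Complex.cpow_add _ _ hzne]
      simp
    have e4 : z * deriv k z = (a - 1) * k z + a * (z ^ a * (z + Complex.I) ^ (β - 1)) := by
      have := hodek z hz
      rw [hfundef] at this
      rw [this, hqdef]
    have hD0 : deriv k z * z ^ ((1:ℂ) - a) + k z * (((1:ℂ) - a) * z ^ ((1:ℂ) - a - 1)) -
        γ * (β * (z + Complex.I) ^ (β - 1) * 1) = 0 := by
      rw [e1, e2]
      linear_combination (z ^ (-a)) * e4 + (a * (z + Complex.I) ^ (β - 1)) * e3 -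
        ((z + Complex.I) ^ (β - 1)) * hγβ
    rw [← hD0]
    exact hd3
  -- m is constant
  have hIU : Complex.I ∈ U := by
    rw [mem_U_iff]
    simp
  have hconst : ∀ z ∈ U, m z = m Complex.I := by
    intro z hz
    have hmdiff : DifferentiableOn ℂ m U := fun ζ hζ =>
      ((hm' ζ hζ).differentiableAt).differentiableWithinAt
    have hzero : ∀ ζ ∈ U, fderivWithin ℂ m U ζ = 0 := by
      intro ζ hζ
      rw [fderivWithin_of_isOpen isOpen_U hζ, ((hm' ζ hζ).hasFDerivAt).fderiv]
      ext v
      simp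
    exact convex_U.is_const_of_fderivWithin_eq_zero hmdiff hzero hz hIU
  set C' : ℂ := m Complex.I with hC'def
  -- formula for g
  have hgform : ∀ z ∈ U, g z = z ^ (a - 1) *
      (a * C' + (a * γ * (z + Complex.I) ^ β + a * z * (z + Complex.I) ^ (β - 1))) := by
    intro z hz
    have hzne : z ≠ 0 := ne_zero_of_mem_U hz
    have hmz : k z * z ^ ((1:ℂ) - a) - γ * (z + Complex.I) ^ β = C' := hconst z hz
    have ezz : z ^ (a - 1) * z ^ ((1:ℂ) - a) = 1 := by
      rw [← Complex.cpow_add _ _ hzne, show (a - 1) + ((1:ℂ) - a) = 0 by ring,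
        Complex.cpow_zero]
    have hk : k z = z ^ (a - 1) * (C' + γ * (z + Complex.I) ^ β) := by
      linear_combination (z ^ (a - 1)) * hmz - k z * ezz
    have hkz : k z = w * g z - hfun z := rfl
    have h5 : g z = a * k z + a * hfun z := by
      linear_combination (-a) * hkz + (-(g z)) * haw
    have hhz : hfun z = z ^ a * (z + Complex.I) ^ (β - 1) := by
      rw [hfundef, hqdef]
    have eza : z ^ a = z ^ (a - 1) * z := by
      have h7 : z ^ ((a - 1) + 1) = z ^ (a - 1) * z ^ (1:ℂ) := Complex.cpow_add _ _ hzne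
      rw [show (a - 1) + 1 = a by ring, Complex.cpow_one] at h7
      exact h7
    linear_combination h5 + a * hk + a * hhz + (a * (z + Complex.I) ^ (β - 1)) * eza
  -- case analysis
  by_cases hC : C' = 0
  · have hgform2 : ∀ z ∈ U, g z = z ^ (a - 1) *
        (a * γ * (z + Complex.I) ^ β + a * z * (z + Complex.I) ^ (β - 1)) := by
      intro z hz
      have := hgform z hz
      rw [hC] at this
      rw [this]
      ring
    have htop := case_origin hp g hane hγne ha hβre hgform2
    rw [htop] at hgfin
    exact lt_irrefl ⊤ hgfin
  · have htop := case_infty hp g hane hC ha hβre hgform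
    rw [htop] at hgfin
    exact lt_irrefl ⊤ hgfin
end

section
/- The Cesàro operator does not map H^1(𝕌) into H^1(𝕌): the function h(z) = (i+z)^{-2} belongs to H^1(𝕌), for every z ∈ 𝕌 one has (1/z) ∫_{[0,z]} (i+ζ)^{-2} dζ = −i (i+z)^{-1}, and the function z ↦ (i+z)^{-1} does not belong to H^1(𝕌). -/
open Complex MeasureTheory Filter Topology Bornology

lemma cpow_neg_two (x : ℂ) : x ^ (-2 : ℂ) = (x ^ 2)⁻¹ := by
  have h : ((-2 : ℤ) : ℂ) = (-2 : ℂ) := by norm_num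
  rw [← h, Complex.cpow_intCast]
  rw [zpow_neg, zpow_two, sq]

lemma im_pos_ne (z : ℂ) (hz : 0 < z.im) : z ≠ 0 := by
  intro h; rw [h] at hz; simp at hz

lemma aux_ne (z : ℂ) (hz : 0 < z.im) (t : ℝ) (ht : 0 ≤ t) : Complex.I + (t : ℂ) * z ≠ 0 := by
  intro h
  have : (Complex.I + (t : ℂ) * z).im = 0 := by rw [h]; simp
  simp only [Complex.add_im, Complex.I_im, Complex.mul_im, Complex.ofReal_re, Complex.ofReal_im] at this
  nlinarith [mul_nonneg ht hz.le]

lemma key_integral (z : ℂ) (hz : 0 < z.im) :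
    ∫ t in (0:ℝ)..1, ((Complex.I + (t : ℂ) * z) ^ 2)⁻¹
      = -(z⁻¹ * (Complex.I + z)⁻¹) + z⁻¹ * Complex.I⁻¹ := by
  have hz0 : z ≠ 0 := im_pos_ne z hz
  have h := intervalIntegral.integral_eq_sub_of_hasDerivAt
    (f := fun t : ℝ => -z⁻¹ * (Complex.I + (t : ℂ) * z)⁻¹)
    (f' := fun t : ℝ => ((Complex.I + (t : ℂ) * z) ^ 2)⁻¹)
    (a := 0) (b := 1) ?_ ?_
  · rw [h]; push_cast; simp; ring
  · intro t ht
    rw [Set.uIcc_of_le (by norm_num : (0:ℝ) ≤ 1)] at ht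
    have hne : Complex.I + (t : ℂ) * z ≠ 0 := aux_ne z hz t ht.1
    have h1 : HasDerivAt (fun w : ℂ => Complex.I + w * z) z (t : ℂ) := by
      simpa using ((hasDerivAt_id (t : ℂ)).mul_const z).const_add Complex.I
    have h2 := ((h1.inv hne).const_mul (-z⁻¹)).comp_ofReal
    refine h2.congr_deriv ?_
    rw [neg_div, neg_mul_neg, mul_div_assoc', inv_mul_cancel₀ hz0, one_div]
  · apply ContinuousOn.intervalIntegrable
    apply ContinuousOn.inv₀
    · exact ((continuous_const.add (Complex.continuous_ofReal.mul continuous_const)).pow 2).continuousOn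
    · intro t ht
      rw [Set.uIcc_of_le (by norm_num : (0:ℝ) ≤ 1)] at ht
      exact pow_ne_zero _ (aux_ne z hz t ht.1)


lemma part2 (z : ℂ) (hz : 0 < z.im) :
    cesaro (fun ζ => (Complex.I + ζ) ^ (-2 : ℂ)) z = -Complex.I * (Complex.I + z)⁻¹ := by
  have hz0 : z ≠ 0 := im_pos_ne z hz
  have hIz : Complex.I + z ≠ 0 := by
    have := aux_ne z hz 1 zero_le_one; simpa using this
  have hIoc : ∫ t in Set.Ioc (0:ℝ) 1, (Complex.I + (t : ℂ) * z) ^ (-2 : ℂ)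
      = -(z⁻¹ * (Complex.I + z)⁻¹) + z⁻¹ * Complex.I⁻¹ := by
    rw [← intervalIntegral.integral_of_le (by norm_num : (0:ℝ) ≤ 1)]
    simp only [cpow_neg_two]
    exact key_integral z hz
  rw [cesaro, segInt0, hIoc]
  field_simp
  ring_nf
  rw [Complex.I_sq]
  ring



lemma abs_sq_eval (x y : ℝ) :
    ‖Complex.I + ((x:ℂ) + (y:ℂ) * Complex.I)‖ ^ 2 = x ^ 2 + (1 + y) ^ 2 := by
  rw [Complex.sq_norm, Complex.normSq_apply]
  simp
  ring

lemma part1 : MemHp 1 (fun z => (Complex.I + z) ^ (-2 : ℂ)) := by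
  constructor
  · have heq : (fun z : ℂ => (Complex.I + z) ^ (-2 : ℂ)) = fun z => ((Complex.I + z) ^ 2)⁻¹ :=
      funext fun z => cpow_neg_two _
    rw [heq]
    apply DifferentiableOn.inv
    · exact (((differentiable_const Complex.I).add differentiable_id).pow 2).differentiableOn
    · intro z hz
      exact pow_ne_zero _ (by simpa using aux_ne z hz 1 zero_le_one)
  · have hbound : (∫⁻ x : ℝ, ENNReal.ofReal ((1 + x ^ 2)⁻¹)) < ⊤ := by
      rw [← hasFiniteIntegral_iff_ofReal (by filter_upwards with x; positivity)]
      exact integrable_inv_one_add_sq.hasFiniteIntegral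
    refine lt_of_le_of_lt ?_ hbound
    apply iSup₂_le
    intro y hy
    apply lintegral_mono
    intro x
    apply ENNReal.ofReal_le_ofReal
    simp only [cpow_neg_two, Real.rpow_one, map_inv₀, map_pow, norm_inv, norm_pow]
    rw [abs_sq_eval]
    apply inv_anti₀ (by positivity)
    have hy' : 0 < y := hy
    nlinarith

set_option maxHeartbeats 1000000 in
lemma part3 : ¬ MemHp 1 (fun z => (Complex.I + z)⁻¹) := by
  rintro ⟨-, hfin⟩
  set g : ℝ → ℝ := fun x => ‖(x:ℂ) + 2 * Complex.I‖⁻¹ with hg_def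
  have hrw : ∀ x : ℝ, Complex.I + ((x:ℂ) + (1:ℂ) * Complex.I) = (x:ℂ) + 2 * Complex.I := by
    intro x; ring
  simp only [hNormPow] at hfin
  have h1 : (∫⁻ x : ℝ, ENNReal.ofReal
      (‖(Complex.I + ((x:ℂ) + ((1:ℝ):ℂ) * Complex.I))⁻¹‖ ^ (1:ℝ)))
      ≤ ⨆ y ∈ Set.Ioi (0:ℝ), ∫⁻ x : ℝ,
        ENNReal.ofReal (‖(Complex.I + ((x:ℂ) + (y:ℂ) * Complex.I))⁻¹‖ ^ (1:ℝ)) :=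
    le_biSup (f := fun y : ℝ => ∫⁻ x : ℝ,
      ENNReal.ofReal (‖(Complex.I + ((x:ℂ) + (y:ℂ) * Complex.I))⁻¹‖ ^ (1:ℝ)))
      (show (1:ℝ) ∈ Set.Ioi 0 by norm_num)
  have hfun : (fun x : ℝ => ENNReal.ofReal
      (‖(Complex.I + ((x:ℂ) + ((1:ℝ):ℂ) * Complex.I))⁻¹‖ ^ (1:ℝ)))
      = fun x : ℝ => ENNReal.ofReal (g x) := by
    funext x
    have hx : Complex.I + ((x:ℂ) + ((1:ℝ):ℂ) * Complex.I) = (x:ℂ) + 2 * Complex.I := by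
      push_cast; ring
    rw [Real.rpow_one, hx, norm_inv]
  have hterm : (∫⁻ x : ℝ, ENNReal.ofReal (g x)) < ⊤ := by
    rw [← hfun]
    exact lt_of_le_of_lt h1 hfin
  have hApos : ∀ x : ℝ, 0 < ‖(x:ℂ) + 2 * Complex.I‖ := by
    intro x
    apply norm_pos_iff.mpr
    intro h
    have : ((x:ℂ) + 2 * Complex.I).im = 0 := by rw [h]; simp
    simp at this
  have hcont : Continuous g :=
    (continuous_norm.comp (Complex.continuous_ofReal.add continuous_const)).inv₀
      (fun x => (hApos x).ne')
  have hg : Integrable g := by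
    refine ⟨hcont.aestronglyMeasurable, ?_⟩
    rw [hasFiniteIntegral_iff_ofReal (by filter_upwards with x; positivity)]
    exact hterm
  have hgI : IntegrableOn g (Set.Ioi 1) := hg.integrableOn
  have hrp : IntegrableOn (fun x : ℝ => x ^ (-1 : ℝ)) (Set.Ioi 1) := by
    have h3g : IntegrableOn (fun x => 3 * g x) (Set.Ioi 1) := hgI.const_mul 3
    refine Integrable.mono h3g (measurable_inv.aestronglyMeasurable.congr ?_) ?_
    · filter_upwards with x
      rw [Real.rpow_neg_one]
    · filter_upwards [ae_restrict_mem measurableSet_Ioi] with x hx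
      have hx1 : (1:ℝ) < x := hx
      have hx0 : (0:ℝ) < x := by linarith
      have hA := hApos x
      have hA2 : ‖(x:ℂ) + 2 * Complex.I‖ ^ 2 = x ^ 2 + 4 := by
        rw [Complex.sq_norm, Complex.normSq_apply]
        simp
        ring
      set A := ‖(x:ℂ) + 2 * Complex.I‖ with hA_def
      have hA3 : A ≤ 3 * x := by nlinarith [sq_nonneg (A - 3 * x)]
      rw [Real.norm_eq_abs, Real.norm_eq_abs, Real.rpow_neg_one,
        _root_.abs_of_nonneg (inv_nonneg.mpr hx0.le), _root_.abs_of_nonneg (by positivity : (0:ℝ) ≤ 3 * g x)]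
      show x⁻¹ ≤ 3 * A⁻¹
      rw [inv_eq_one_div, mul_comm, inv_eq_one_div, div_mul_eq_mul_div, div_le_div_iff₀ hx0 hA]
      linarith
  have := (integrableOn_Ioi_rpow_iff zero_lt_one).mp hrp
  linarith

/-- `𝒞` does not map `H^1(𝕌)` into `H^1(𝕌)`: `h(z) = (i+z)^{−2}` is in
`H^1(𝕌)`, `𝒞(h)(z) = −i(i+z)^{−1}` on `𝕌`, and `z ↦ (i+z)^{−1}` is not in `H^1(𝕌)`. -/
theorem cesaro_not_bounded_on_H1 :
    MemHp 1 (fun z => (Complex.I + z) ^ (-2 : ℂ)) ∧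
      (∀ z : ℂ, 0 < z.im →
        cesaro (fun ζ => (Complex.I + ζ) ^ (-2 : ℂ)) z = -Complex.I * (Complex.I + z)⁻¹) ∧
      ¬ MemHp 1 (fun z => (Complex.I + z)⁻¹) := by
  exact ⟨part1, fun z hz => part2 z hz, part3⟩
end
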